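/- arXiv:2004.14778 — 6 statements merged into one kernel-verified Lean document; each statement's English description precedes it below -/
import Mathlib

section
/- Let X be an m×m complex Hermitian positive definite matrix and n ≥ 1 an integer. The function f_{X,n}(Y) := trace((X·Y^{−1})^n), which is real-valued on Hermitian positive definite matrices Y, is strictly convex on the set of m×m Hermitian positive definite matrices: for any Hermitian positive definite Y₁ ≠ Y₂ and any t ∈ (0,1), trace((X·(tY₁+(1−t)Y₂)^{−1})^n) < t·trace((X·Y₁^{−1})^n) + (1−t)·trace((X·Y₂^{−1})^n). -/
/-!
Write `X = Rᴴ R` with `R` invertible; then `trace ((X M)ⁿ) = trace ((R M Rᴴ)ⁿ)`, so everything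
reduces to `f P = trace Pⁿ` on positive semidefinite matrices. Expanding `P` and `Q` in their
eigenbases `(uᵢ)`, `(vⱼ)` turns `trace (Pᵃ Qᵇ)` into `∑ |⟨uᵢ, vⱼ⟩|² λᵢᵃ μⱼᵇ`, so the scalar
tangent-line inequality for `x ↦ xⁿ` lifts to `f Q ≥ f P + n trace (Pⁿ⁻¹ (Q - P))`. Hence `f` is
convex, and it strictly increases from a positive definite `P` in any nonzero positive
semidefinite direction, because then `trace (Pⁿ⁻¹ D) > 0`.

The inverse is operator convex, strictly so: by the variational formula
`x* Y⁻¹ x = max_y (2 Re y* x - y* Y y)`, maximised at `y = Y⁻¹ x`, the quadratic form of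
`t Y₁⁻¹ + (1 - t) Y₂⁻¹ - (t Y₁ + (1 - t) Y₂)⁻¹` is a sum of two nonnegative terms which vanish
for all `x` only if `Y₁⁻¹ = Y₂⁻¹`. Conjugating by `R` and combining,
`f (R C⁻¹ Rᴴ) < f (t R Y₁⁻¹ Rᴴ + (1 - t) R Y₂⁻¹ Rᴴ) ≤ t f (R Y₁⁻¹ Rᴴ) + (1 - t) f (R Y₂⁻¹ Rᴴ)`
for `C = t Y₁ + (1 - t) Y₂`.
-/

open Matrix ComplexOrder

lemma pow_succ_add_mul_sub_le_pow_succ {a b : ℝ} (ha : 0 ≤ a) (hb : 0 ≤ b) (n : ℕ) :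
    a ^ (n + 1) + (n + 1) * a ^ n * (b - a) ≤ b ^ (n + 1) := by
  rcases ha.eq_or_lt with rfl | ha
  · cases n <;> simp [pow_nonneg hb]
  have h := one_add_mul_sub_le_pow (a := b / a) (by linarith [div_nonneg hb ha.le]) (n + 1)
  rw [div_pow, le_div_iff₀ (by positivity)] at h
  calc a ^ (n + 1) + (n + 1) * a ^ n * (b - a)
      = (1 + ((n + 1 : ℕ) : ℝ) * (b / a - 1)) * a ^ (n + 1) := by
        field_simp; push_cast; ring
    _ ≤ b ^ (n + 1) := h

lemma IsUnit.mul_mul_star_ne_zero {M₀ : Type*} [MonoidWithZero M₀] [StarMul M₀] {u a : M₀}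
    (hu : IsUnit u) (ha : a ≠ 0) : u * a * star u ≠ 0 := by
  rwa [Ne, hu.star.mul_left_eq_zero, hu.mul_right_eq_zero]

lemma Matrix.trace_mul_pow_comm {ι R : Type*} [Fintype ι] [DecidableEq ι] [CommSemiring R]
    (A B : Matrix ι ι R) (n : ℕ) : ((A * B) ^ n).trace = ((B * A) ^ n).trace := by
  cases n with
  | zero => simp
  | succ n =>
    rw [pow_succ', mul_assoc, trace_mul_comm, mul_assoc, mul_pow_mul, ← mul_assoc, ← pow_succ']

variable {ι 𝕜 : Type*} [RCLike 𝕜]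

lemma Matrix.PosDef.smul_add_smul {A B : Matrix ι ι 𝕜} (hA : A.PosDef) (hB : B.PosDef)
    {s t : ℝ} (hs : 0 < s) (ht : 0 < t) : ((s : 𝕜) • A + (t : 𝕜) • B).PosDef :=
  (hA.smul (RCLike.ofReal_pos.mpr hs)).add (hB.smul (RCLike.ofReal_pos.mpr ht))

variable [Fintype ι] [DecidableEq ι]

namespace Matrix.IsHermitian

lemma spectral_theorem_pow {A : Matrix ι ι 𝕜} (hA : A.IsHermitian) (p : ℕ) :
    A ^ p = Unitary.conjStarAlgAut 𝕜 _ hA.eigenvectorUnitary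
      (diagonal fun i ↦ (hA.eigenvalues i : 𝕜) ^ p) := by
  conv_lhs => rw [hA.spectral_theorem]
  rw [← map_pow, diagonal_pow]
  rfl

lemma exists_trace_pow_mul_pow_eq_sum {A B : Matrix ι ι 𝕜} (hA : A.IsHermitian)
    (hB : B.IsHermitian) :
    ∃ w : ι → ι → ℝ, (∀ i j, 0 ≤ w i j) ∧ ∀ p q : ℕ, (A ^ p * B ^ q).trace =
      ((∑ i, ∑ j, w i j * hA.eigenvalues i ^ p * hB.eigenvalues j ^ q : ℝ) : 𝕜) := by
  set U : Matrix ι ι 𝕜 := ↑hA.eigenvectorUnitary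
  set V : Matrix ι ι 𝕜 := ↑hB.eigenvectorUnitary
  set S := star U * V
  refine ⟨fun i j ↦ RCLike.normSq (S i j), fun i j ↦ RCLike.normSq_nonneg _, fun p q ↦ ?_⟩
  have hS : star V * U = star S := by simp [S, star_mul]
  rw [hA.spectral_theorem_pow, hB.spectral_theorem_pow, Unitary.conjStarAlgAut_apply,
    Unitary.conjStarAlgAut_apply,
    show U * diagonal (fun i ↦ (hA.eigenvalues i : 𝕜) ^ p) * star U *
        (V * diagonal (fun j ↦ (hB.eigenvalues j : 𝕜) ^ q) * star V)
      = U * (diagonal (fun i ↦ (hA.eigenvalues i : 𝕜) ^ p) * S *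
        diagonal (fun j ↦ (hB.eigenvalues j : 𝕜) ^ q) * star V) by simp only [S, mul_assoc],
    trace_mul_comm, mul_assoc, hS, trace]
  push_cast
  refine Finset.sum_congr rfl fun i _ ↦ Finset.sum_congr rfl fun j _ ↦ ?_
  simp only [diagonal, mul_apply, of_apply, ite_mul, zero_mul, Finset.sum_ite_eq,
    Finset.mem_univ, ↓reduceIte, mul_ite, mul_zero, Finset.sum_ite_eq', star_apply,
    RCLike.star_def, RCLike.normSq_eq_def', map_pow]
  linear_combination
    (↑(hA.eigenvalues i) ^ p * ↑(hB.eigenvalues j) ^ q : 𝕜) * RCLike.mul_conj (S i j)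

lemma dotProduct_inv_mulVec_sub_eq {A : Matrix ι ι 𝕜} (hA : A.IsHermitian) (hAu : IsUnit A)
    (x y : ι → 𝕜) :
    star x ⬝ᵥ A⁻¹ *ᵥ x - (star y ⬝ᵥ x + star x ⬝ᵥ y - star y ⬝ᵥ A *ᵥ y)
      = star (y - A⁻¹ *ᵥ x) ⬝ᵥ A *ᵥ (y - A⁻¹ *ᵥ x) := by
  have hdet : IsUnit A.det := (isUnit_iff_isUnit_det A).mp hAu
  have hAz : A *ᵥ (A⁻¹ *ᵥ x) = x := by rw [mulVec_mulVec, mul_nonsing_inv _ hdet, one_mulVec]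
  have hzA : star (A⁻¹ *ᵥ x) ⬝ᵥ A *ᵥ y = star x ⬝ᵥ y := by
    rw [dotProduct_mulVec, star_mulVec, vecMul_vecMul, hA.inv.eq, nonsing_inv_mul _ hdet,
      vecMul_one]
  have hzx : star (A⁻¹ *ᵥ x) ⬝ᵥ x = star x ⬝ᵥ A⁻¹ *ᵥ x := by
    rw [star_mulVec, hA.inv.eq, ← dotProduct_mulVec]
  rw [mulVec_sub, star_sub, sub_dotProduct, dotProduct_sub, dotProduct_sub, hAz, hzA, hzx]
  ring

lemma dotProduct_smul_inv_add_smul_inv_sub_inv_mulVec {A B : Matrix ι ι 𝕜}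
    (hA : A.IsHermitian) (hB : B.IsHermitian) (hAu : IsUnit A) (hBu : IsUnit B) {s t : ℝ}
    (hCu : IsUnit ((s : 𝕜) • A + (t : 𝕜) • B)) (hst : s + t = 1) (x : ι → 𝕜) :
    let z := ((s : 𝕜) • A + (t : 𝕜) • B)⁻¹ *ᵥ x
    star x ⬝ᵥ ((s : 𝕜) • A⁻¹ + (t : 𝕜) • B⁻¹ - ((s : 𝕜) • A + (t : 𝕜) • B)⁻¹) *ᵥ x
      = s * (star (z - A⁻¹ *ᵥ x) ⬝ᵥ A *ᵥ (z - A⁻¹ *ᵥ x))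
        + t * (star (z - B⁻¹ *ᵥ x) ⬝ᵥ B *ᵥ (z - B⁻¹ *ᵥ x)) := by
  intro z
  have hC := ((hA.smul (RCLike.conj_ofReal s)).add (hB.smul (RCLike.conj_ofReal t)))
    |>.dotProduct_inv_mulVec_sub_eq hCu x z
  rw [sub_self, mulVec_zero, dotProduct_zero] at hC
  have hst' : (s : 𝕜) + t = 1 := by exact_mod_cast hst
  rw [← hA.dotProduct_inv_mulVec_sub_eq hAu, ← hB.dotProduct_inv_mulVec_sub_eq hBu]
  simp only [sub_mulVec, add_mulVec, smul_mulVec, dotProduct_sub, dotProduct_add,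
    dotProduct_smul, smul_eq_mul] at hC ⊢
  linear_combination -hC + (star z ⬝ᵥ x + star x ⬝ᵥ z) * hst'

end Matrix.IsHermitian

namespace Matrix.PosSemidef

lemma trace_pow_succ_add_mul_trace_le {A B : Matrix ι ι 𝕜} (hA : A.PosSemidef)
    (hB : B.PosSemidef) (n : ℕ) :
    (A ^ (n + 1)).trace + (n + 1) * (A ^ n * (B - A)).trace ≤ (B ^ (n + 1)).trace := by
  obtain ⟨w, hw, htr⟩ := hA.1.exists_trace_pow_mul_pow_eq_sum hB.1
  have hA₁ := htr (n + 1) 0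
  have hAB := htr n 1
  have hB₁ := htr 0 (n + 1)
  simp only [pow_zero, pow_one, mul_one, one_mul] at hA₁ hAB hB₁
  rw [mul_sub, trace_sub, ← pow_succ, hA₁, hAB, hB₁]
  have key : ∑ i, ∑ j, w i j * hA.1.eigenvalues i ^ (n + 1)
      + (n + 1) * (∑ i, ∑ j, w i j * hA.1.eigenvalues i ^ n * hB.1.eigenvalues j
        - ∑ i, ∑ j, w i j * hA.1.eigenvalues i ^ (n + 1))
      ≤ ∑ i, ∑ j, w i j * hB.1.eigenvalues j ^ (n + 1) := by
    simp only [mul_sub, Finset.mul_sum, ← Finset.sum_sub_distrib, ← Finset.sum_add_distrib]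
    gcongr with i _ j _
    have := pow_succ_add_mul_sub_le_pow_succ (hA.eigenvalues_nonneg i) (hB.eigenvalues_nonneg j)
    linear_combination mul_le_mul_of_nonneg_left (this n) (hw i j)
  exact_mod_cast (RCLike.ofReal_le_ofReal (K := 𝕜)).mpr key

lemma trace_pow_succ_smul_add_smul_le {A B : Matrix ι ι 𝕜} (hA : A.PosSemidef)
    (hB : B.PosSemidef) {s t : ℝ} (hs : 0 ≤ s) (ht : 0 ≤ t) (hst : s + t = 1) (n : ℕ) :
    (((s : 𝕜) • A + (t : 𝕜) • B) ^ (n + 1)).trace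
      ≤ s * (A ^ (n + 1)).trace + t * (B ^ (n + 1)).trace := by
  set M := (s : 𝕜) • A + (t : 𝕜) • B
  have hs' : (0 : 𝕜) ≤ s := RCLike.ofReal_nonneg.mpr hs
  have ht' : (0 : 𝕜) ≤ t := RCLike.ofReal_nonneg.mpr ht
  have hM : M.PosSemidef := (hA.smul hs').add (hB.smul ht')
  have hA' := hM.trace_pow_succ_add_mul_trace_le hA n
  have hB' := hM.trace_pow_succ_add_mul_trace_le hB n
  have hcancel : (s : 𝕜) * (M ^ n * (A - M)).trace + t * (M ^ n * (B - M)).trace = 0 := by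
    have h : (s : 𝕜) • (A - M) + (t : 𝕜) • (B - M) = 0 := by
      rw [smul_sub, smul_sub, sub_add_sub_comm, ← add_smul, ← RCLike.ofReal_add, hst,
        RCLike.ofReal_one, one_smul, sub_self]
    simpa only [mul_add, mul_smul_comm, trace_add, trace_smul, smul_eq_mul, mul_zero,
      trace_zero] using congr_arg (fun N ↦ (M ^ n * N).trace) h
  have hst' : (s : 𝕜) + t = 1 := by exact_mod_cast hst
  linear_combination (s : 𝕜) * hA' + (t : 𝕜) * hB' - (n + 1 : 𝕜) * hcancel
    - (M ^ (n + 1)).trace * hst'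

end Matrix.PosSemidef

namespace Matrix.PosDef

open scoped MatrixOrder in
lemma exists_isUnit_eq_conjTranspose_mul {A : Matrix ι ι 𝕜} (hA : A.PosDef) :
    ∃ R : Matrix ι ι 𝕜, IsUnit R ∧ A = Rᴴ * R :=
  CStarAlgebra.isStrictlyPositive_iff_eq_star_mul_self.mp hA.isStrictlyPositive

lemma trace_mul_pos {A B : Matrix ι ι 𝕜} (hA : A.PosDef) (hB : B.PosSemidef) (hB₀ : B ≠ 0) :
    0 < (A * B).trace := by
  obtain ⟨R, hR, rfl⟩ := hA.exists_isUnit_eq_conjTranspose_mul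
  have hRBR : (R * B * Rᴴ).PosSemidef := hB.mul_mul_conjTranspose_same R
  rw [← trace_mul_cycle]
  exact hRBR.trace_nonneg.lt_of_ne'
    (hRBR.trace_eq_zero_iff.not.mpr (hR.mul_mul_star_ne_zero hB₀))

lemma trace_pow_succ_lt_trace_add_pow_succ {A D : Matrix ι ι 𝕜} (hA : A.PosDef)
    (hD : D.PosSemidef) (hD₀ : D ≠ 0) (n : ℕ) :
    (A ^ (n + 1)).trace < ((A + D) ^ (n + 1)).trace := by
  have htangent := hA.posSemidef.trace_pow_succ_add_mul_trace_le (hA.posSemidef.add hD) n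
  rw [add_sub_cancel_left] at htangent
  have hpos : 0 < (A ^ n * D).trace :=
    ((hA.posSemidef.pow n).posDef_iff_isUnit.mpr (hA.isUnit.pow n)).trace_mul_pos hD hD₀
  linear_combination htangent + (n + 1 : 𝕜) * hpos

lemma posSemidef_smul_inv_add_smul_inv_sub_inv {A B : Matrix ι ι 𝕜} (hA : A.PosDef)
    (hB : B.PosDef) {s t : ℝ} (hs : 0 < s) (ht : 0 < t) (hst : s + t = 1) :
    ((s : 𝕜) • A⁻¹ + (t : 𝕜) • B⁻¹ - ((s : 𝕜) • A + (t : 𝕜) • B)⁻¹).PosSemidef := by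
  have hC := hA.smul_add_smul hB hs ht
  refine .of_dotProduct_mulVec_nonneg
    (((hA.1.inv.smul (RCLike.conj_ofReal s)).add (hB.1.inv.smul (RCLike.conj_ofReal t))).sub
      hC.1.inv) fun x ↦ ?_
  rw [hA.1.dotProduct_smul_inv_add_smul_inv_sub_inv_mulVec hB.1 hA.isUnit hB.isUnit hC.isUnit
    hst]
  exact add_nonneg
    (mul_nonneg (RCLike.ofReal_nonneg.mpr hs.le) (hA.posSemidef.dotProduct_mulVec_nonneg _))
    (mul_nonneg (RCLike.ofReal_nonneg.mpr ht.le) (hB.posSemidef.dotProduct_mulVec_nonneg _))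

lemma smul_inv_add_smul_inv_sub_inv_ne_zero {A B : Matrix ι ι 𝕜} (hA : A.PosDef)
    (hB : B.PosDef) (hAB : A ≠ B) {s t : ℝ} (hs : 0 < s) (ht : 0 < t) (hst : s + t = 1) :
    (s : 𝕜) • A⁻¹ + (t : 𝕜) • B⁻¹ - ((s : 𝕜) • A + (t : 𝕜) • B)⁻¹ ≠ 0 := by
  intro hzero
  have hC := hA.smul_add_smul hB hs ht
  have hinv : ∀ x, A⁻¹ *ᵥ x = B⁻¹ *ᵥ x := by
    intro x
    have h := hA.1.dotProduct_smul_inv_add_smul_inv_sub_inv_mulVec hB.1 hA.isUnit hB.isUnit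
      hC.isUnit hst x
    set z := ((s : 𝕜) • A + (t : 𝕜) • B)⁻¹ *ᵥ x
    rw [hzero, zero_mulVec, dotProduct_zero] at h
    obtain ⟨hqA, hqB⟩ := (add_eq_zero_iff_of_nonneg
      (mul_nonneg (RCLike.ofReal_nonneg.mpr hs.le) (hA.posSemidef.dotProduct_mulVec_nonneg _))
      (mul_nonneg (RCLike.ofReal_nonneg.mpr ht.le) (hB.posSemidef.dotProduct_mulVec_nonneg _))).mp
      h.symm
    have hzA : z - A⁻¹ *ᵥ x = 0 := by
      by_contra hv
      exact (mul_pos (RCLike.ofReal_pos.mpr hs) (hA.dotProduct_mulVec_pos hv)).ne' hqA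
    have hzB : z - B⁻¹ *ᵥ x = 0 := by
      by_contra hv
      exact (mul_pos (RCLike.ofReal_pos.mpr ht) (hB.dotProduct_mulVec_pos hv)).ne' hqB
    rw [← sub_eq_zero.mp hzA, ← sub_eq_zero.mp hzB]
  exact hAB (inv_inj (ext_of_mulVec_single fun i ↦ hinv _)
    ((isUnit_iff_isUnit_det A).mp hA.isUnit))

end Matrix.PosDef

/-- **Strict convexity of `Y ↦ trace((X Y⁻¹)ⁿ)`** on Hermitian positive definite matrices.
For a fixed Hermitian positive definite `X` and an integer `n ≥ 1`, and for any two distinct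
Hermitian positive definite matrices `Y₁ ≠ Y₂` and `t ∈ (0,1)`, one has
`trace((X (tY₁+(1−t)Y₂)⁻¹)ⁿ) < t·trace((X Y₁⁻¹)ⁿ) + (1−t)·trace((X Y₂⁻¹)ⁿ)`
(an inequality of real numbers, expressed in the complex order). -/
theorem strictConvex_trace_pow_inv
    {m : ℕ} (X : Matrix (Fin m) (Fin m) ℂ) (hX : X.PosDef)
    (n : ℕ) (hn : 1 ≤ n)
    (Y₁ Y₂ : Matrix (Fin m) (Fin m) ℂ) (hY₁ : Y₁.PosDef) (hY₂ : Y₂.PosDef)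
    (hne : Y₁ ≠ Y₂) (t : ℝ) (ht : t ∈ Set.Ioo (0 : ℝ) 1) :
    Matrix.trace ((X * ((t : ℂ) • Y₁ + ((1 - t : ℝ) : ℂ) • Y₂)⁻¹) ^ n)
      < (t : ℂ) * Matrix.trace ((X * Y₁⁻¹) ^ n)
        + ((1 - t : ℝ) : ℂ) * Matrix.trace ((X * Y₂⁻¹) ^ n) := by
  obtain ⟨ht₀, ht₁⟩ := ht
  replace ht₁ : 0 < 1 - t := sub_pos.mpr ht₁
  have hst : t + (1 - t) = 1 := add_sub_cancel t 1
  obtain ⟨k, rfl⟩ : ∃ k, n = k + 1 := ⟨n - 1, by omega⟩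
  obtain ⟨R, hR, rfl⟩ := hX.exists_isUnit_eq_conjTranspose_mul
  set C := (t : ℂ) • Y₁ + ((1 - t : ℝ) : ℂ) • Y₂
  set Δ := (t : ℂ) • Y₁⁻¹ + ((1 - t : ℝ) : ℂ) • Y₂⁻¹ - C⁻¹
  have hP : (R * C⁻¹ * Rᴴ).PosDef :=
    hR.posDef_star_right_conjugate_iff.mpr (hY₁.smul_add_smul hY₂ ht₀ ht₁).inv
  have hD : (R * Δ * Rᴴ).PosSemidef :=
    (hY₁.posSemidef_smul_inv_add_smul_inv_sub_inv hY₂ ht₀ ht₁ hst).mul_mul_conjTranspose_same R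
  have hD₀ : R * Δ * Rᴴ ≠ 0 :=
    hR.mul_mul_star_ne_zero (hY₁.smul_inv_add_smul_inv_sub_inv_ne_zero hY₂ hne ht₀ ht₁ hst)
  have hconj (M) : ((Rᴴ * R * M) ^ (k + 1)).trace = ((R * M * Rᴴ) ^ (k + 1)).trace := by
    rw [mul_assoc, trace_mul_pow_comm, mul_assoc]
  have hsplit : R * C⁻¹ * Rᴴ + R * Δ * Rᴴ
      = (t : ℂ) • (R * Y₁⁻¹ * Rᴴ) + ((1 - t : ℝ) : ℂ) • (R * Y₂⁻¹ * Rᴴ) := by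
    rw [← add_mul, ← mul_add, add_sub_cancel, mul_add, add_mul, mul_smul_comm, mul_smul_comm,
      smul_mul_assoc, smul_mul_assoc]
  rw [hconj, hconj, hconj]
  calc _ < ((R * C⁻¹ * Rᴴ + R * Δ * Rᴴ) ^ (k + 1)).trace :=
        hP.trace_pow_succ_lt_trace_add_pow_succ hD hD₀ k
    _ ≤ _ := by
      rw [hsplit]
      exact (hY₁.inv.posSemidef.mul_mul_conjTranspose_same R).trace_pow_succ_smul_add_smul_le
        (hY₂.inv.posSemidef.mul_mul_conjTranspose_same R) ht₀.le ht₁.le hst k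
end

section
/- Let p : ℝⁿ → ℝ be the evaluation of a real polynomial in n variables, let θ₀ ∈ ℝⁿ and ε > 0 be such that p(θ₀) = 0 and p(θ) ≥ 0 for all θ in the ball B_ε(θ₀), and let m be a positive integer with m ≥ n/2. Then ∫_{B_ε(θ₀)} p(θ)^{−m} dθ = +∞, where the integral is the Lebesgue integral of the nonnegative extended-real-valued function θ ↦ p(θ)^{−m} (with the convention 0^{−m} = +∞). -/
/-!
Since `p ≥ 0` near its zero `θ₀`, the point `θ₀` is a local minimum, so the derivative of `p`
vanishes there; as that derivative is itself differentiable, the mean value inequality gives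
`p θ ≤ C ‖θ - θ₀‖²` on a small ball. Hence
`p^{-M} ≥ C^{-M} ‖θ - θ₀‖^{-2M}`, and in polar coordinates `‖x‖^{-α}` is integrable near `0` in
dimension `n` only when `α < n`; with `2M ≥ n` the integral diverges.
-/

open MeasureTheory Metric Set Module Asymptotics Filter Topology

section
variable {E : Type*} [NormedAddCommGroup E] [NormedSpace ℝ E]

theorem ContDiffAt.isBigO_sub_norm_sub_sq {F : Type*} [NormedAddCommGroup F] [NormedSpace ℝ F]
    {f : E → F} {x₀ : E} (hf : ContDiffAt ℝ 2 f x₀) (hf' : fderiv ℝ f x₀ = 0) :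
    (fun x ↦ f x - f x₀) =O[𝓝 x₀] fun x ↦ ‖x - x₀‖ ^ 2 := by
  obtain ⟨c, hc, hc'⟩ :=
    ((hf.fderiv_right (m := 1) le_rfl).differentiableAt one_ne_zero).isBigO_sub.exists_pos
  have hdiff : ∀ᶠ y in 𝓝 x₀, DifferentiableAt ℝ f y :=
    (hf.eventually (by simp)).mono fun y hy ↦ hy.differentiableAt (by norm_num)
  obtain ⟨δ, hδ, hball⟩ := eventually_nhds_iff_ball.1 (hc'.bound.and hdiff)
  refine .of_bound c ?_
  filter_upwards [ball_mem_nhds x₀ hδ] with x hx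
  have hsub : closedBall x₀ ‖x - x₀‖ ⊆ ball x₀ δ :=
    closedBall_subset_ball (by rwa [mem_ball, dist_eq_norm] at hx)
  have hderiv : ∀ y ∈ closedBall x₀ ‖x - x₀‖, ‖fderiv ℝ f y‖ ≤ c * ‖x - x₀‖ := fun y hy ↦ by
    have := (hball y (hsub hy)).1
    rw [hf', sub_zero] at this
    exact this.trans (by gcongr; rw [← dist_eq_norm]; exact hy)
  have hx_mem : x ∈ closedBall x₀ ‖x - x₀‖ := by simp [dist_eq_norm]
  have := (convex_closedBall x₀ _).norm_image_sub_le_of_norm_fderiv_le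
    (fun y hy ↦ (hball y (hsub hy)).2) hderiv (mem_closedBall_self (norm_nonneg _)) hx_mem
  simpa [sq, mul_assoc] using this

variable [FiniteDimensional ℝ E] [MeasurableSpace E] [BorelSpace E] (μ : Measure E)
  [μ.IsAddHaarMeasure]

theorem not_integrableOn_ball_norm_rpow_neg [Nontrivial E] {α r : ℝ} (hα : finrank ℝ E ≤ α)
    (hr : 0 < r) : ¬ IntegrableOn (fun x : E ↦ ‖x‖ ^ (-α)) (ball 0 r) μ := by
  have hd : ((finrank ℝ E - 1 : ℕ) : ℝ) = finrank ℝ E - 1 := by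
    have := finrank_pos (R := ℝ) (M := E); push_cast [Nat.one_le_iff_ne_zero.2 this.ne']; ring
  have hpow : EqOn (fun y : ℝ ↦ y ^ (finrank ℝ E - 1) • y ^ (-α))
      (fun y ↦ y ^ ((finrank ℝ E : ℝ) - 1 - α)) (Ioo 0 r) := fun y hy ↦ by
    simp only [smul_eq_mul]
    rw [← Real.rpow_natCast, hd, ← Real.rpow_add hy.1]
    ring_nf
  rw [integrableOn_fun_norm_addHaar μ (f := fun y ↦ y ^ (-α)), integrableOn_congr_fun hpow
    measurableSet_Ioo, intervalIntegral.integrableOn_Ioo_rpow_iff hr]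
  linarith

lemma ENNReal.ofReal_rpow_le_rpow_ofReal {t : ℝ} (ht : 0 ≤ t) (p : ℝ) :
    ENNReal.ofReal (t ^ p) ≤ ENNReal.ofReal t ^ p := by
  rcases ht.eq_or_lt with rfl | ht
  · rcases lt_or_ge p 0 with hp | hp
    · simp [Real.zero_rpow hp.ne, ENNReal.zero_rpow_of_neg hp]
    · rw [ENNReal.ofReal_rpow_of_nonneg le_rfl hp]
  · rw [ENNReal.ofReal_rpow_of_pos ht]

theorem setLIntegral_ball_ofReal_norm_sub_rpow_neg_eq_top [Nontrivial E] (x₀ : E) {α r : ℝ}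
    (hα : finrank ℝ E ≤ α) (hr : 0 < r) :
    ∫⁻ x in ball x₀ r, ENNReal.ofReal ‖x - x₀‖ ^ (-α) ∂μ = ⊤ := by
  have hpre : (· - x₀) ⁻¹' ball 0 r = ball x₀ r := by ext x; simp [dist_eq_norm]
  rw [← hpre, (measurePreserving_sub_right μ x₀).setLIntegral_comp_preimage_emb
    (measurableEmbedding_subRight x₀) (fun x ↦ ENNReal.ofReal ‖x‖ ^ (-α)), eq_top_iff]
  have hmeas : AEStronglyMeasurable (fun x : E ↦ ‖x‖ ^ (-α)) (μ.restrict (ball 0 r)) :=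
    (continuous_norm.measurable.pow_const _).aestronglyMeasurable
  calc ⊤ = ∫⁻ x in ball 0 r, ENNReal.ofReal (‖x‖ ^ (-α)) ∂μ := by
        rw [eq_comm, ← not_ne_iff, lintegral_ofReal_ne_top_iff_integrable hmeas
          (.of_forall fun x ↦ by positivity)]
        exact not_integrableOn_ball_norm_rpow_neg μ hα hr
    _ ≤ _ := lintegral_mono fun x ↦ ENNReal.ofReal_rpow_le_rpow_ofReal (norm_nonneg x) _

end

lemma ENNReal.rpow_neg_mul_rpow_neg_le_ofReal_zpow_neg {a C t : ℝ} (hC : 0 ≤ C) (ht : 0 ≤ t)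
    (h : a ≤ C * t ^ 2) (M : ℕ) :
    ENNReal.ofReal C ^ (-(M : ℝ)) * ENNReal.ofReal t ^ (-(2 * M : ℝ)) ≤
      ENNReal.ofReal a ^ (-(M : ℤ)) :=
  calc _ = ENNReal.ofReal (C * t ^ 2) ^ (-(M : ℝ)) := by
        rw [ENNReal.ofReal_mul hC, ENNReal.ofReal_pow ht, ENNReal.mul_rpow_of_ne_top
          ENNReal.ofReal_ne_top (ENNReal.pow_ne_top ENNReal.ofReal_ne_top), ← ENNReal.rpow_natCast,
          ← ENNReal.rpow_mul]
        push_cast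
        ring_nf
    _ ≤ ENNReal.ofReal a ^ (-(M : ℝ)) := by
        rw [ENNReal.rpow_neg, ENNReal.rpow_neg]
        gcongr
    _ = _ := by rw [← ENNReal.rpow_intCast]; norm_cast

theorem lintegral_pow_neg_of_polynomial_zero_eq_top_general
    {n : ℕ} (hn : 1 ≤ n) (p : MvPolynomial (Fin n) ℝ)
    (θ₀ : EuclideanSpace ℝ (Fin n)) (ε : ℝ) (hε : 0 < ε)
    (h0 : MvPolynomial.eval (fun i => θ₀ i) p = 0)
    (hnonneg : ∀ θ ∈ Metric.ball θ₀ ε, 0 ≤ MvPolynomial.eval (fun i => θ i) p)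
    (M : ℕ) (hMn : (n : ℝ) / 2 ≤ (M : ℝ)) :
    ∫⁻ θ in Metric.ball θ₀ ε,
        (ENNReal.ofReal (MvPolynomial.eval (fun i => θ i) p)) ^ (-(M : ℤ)) ∂volume
      = ⊤ := by
  set f : EuclideanSpace ℝ (Fin n) → ℝ := fun θ ↦ MvPolynomial.eval (fun i ↦ θ i) p
  have hf : ContDiff ℝ 2 f :=
    (AnalyticOnNhd.eval_continuousLinearMap' (fun i : Fin n ↦ EuclideanSpace.proj (𝕜 := ℝ) i)
      p).contDiff
  have hmin : IsLocalMin f θ₀ :=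
    mem_of_superset (ball_mem_nhds θ₀ hε) fun θ hθ ↦ by simpa [f, h0] using hnonneg θ hθ
  obtain ⟨C, hC, hpC⟩ := (hf.contDiffAt.isBigO_sub_norm_sub_sq hmin.fderiv_eq_zero).exists_pos
  obtain ⟨r, hr, hbound⟩ := eventually_nhds_iff_ball.1 (hpC.bound.and (ball_mem_nhds θ₀ hε))
  have : Nonempty (Fin n) := ⟨⟨0, hn⟩⟩
  have hdim : (finrank ℝ (EuclideanSpace ℝ (Fin n)) : ℝ) ≤ 2 * M := by
    rw [finrank_euclideanSpace_fin]; linarith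
  refine eq_top_iff.2 <| calc
    ⊤ = ∫⁻ θ in ball θ₀ r,
          ENNReal.ofReal C ^ (-(M : ℝ)) * ENNReal.ofReal ‖θ - θ₀‖ ^ (-(2 * M : ℝ)) := by
        rw [lintegral_const_mul _ (by fun_prop),
          setLIntegral_ball_ofReal_norm_sub_rpow_neg_eq_top volume θ₀ hdim hr, ENNReal.mul_top]
        exact (ENNReal.rpow_pos (ENNReal.ofReal_pos.2 hC) ENNReal.ofReal_ne_top).ne'
    _ ≤ ∫⁻ θ in ball θ₀ r, ENNReal.ofReal (f θ) ^ (-(M : ℤ)) := by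
        refine setLIntegral_mono' measurableSet_ball fun θ hθ ↦ ?_
        refine ENNReal.rpow_neg_mul_rpow_neg_le_ofReal_zpow_neg hC.le (norm_nonneg _) ?_ M
        simpa [f, h0] using ((hbound θ hθ).1).trans' (le_abs_self _)
    _ ≤ _ := lintegral_mono_set fun θ hθ ↦ (hbound θ hθ).2

/-- **Divergence of the integral of a negative power of a nonnegative polynomial at a zero.**
If the evaluation of a real polynomial `p` in `n` variables vanishes at `θ₀`, is nonnegative
on the Euclidean ball `B_ε(θ₀)`, and `M ≥ n/2` is a positive integer, then
`∫_{B_ε(θ₀)} p(θ)^{-M} dθ = ∞` (Lebesgue integral of the nonnegative extended-real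
function, with the convention `0^{-M} = ∞`). -/
theorem lintegral_pow_neg_of_polynomial_zero_eq_top
    {n : ℕ} (hn : 1 ≤ n) (p : MvPolynomial (Fin n) ℝ)
    (θ₀ : EuclideanSpace ℝ (Fin n)) (ε : ℝ) (hε : 0 < ε)
    (h0 : MvPolynomial.eval (fun i => θ₀ i) p = 0)
    (hnonneg : ∀ θ ∈ Metric.ball θ₀ ε, 0 ≤ MvPolynomial.eval (fun i => θ i) p)
    (M : ℕ) (hM : 1 ≤ M) (hMn : (n : ℝ) / 2 ≤ (M : ℝ)) :
    ∫⁻ θ in Metric.ball θ₀ ε,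
        (ENNReal.ofReal (MvPolynomial.eval (fun i => θ i) p)) ^ (-(M : ℤ)) ∂volume
      = ⊤ :=
  lintegral_pow_neg_of_polynomial_zero_eq_top_general hn p θ₀ ε hε h0 hnonneg M hMn
end

section
/- Let ν ≥ 2 be an integer and A a nonsingular m×m complex matrix, and write A^{−*} := (A^*)^{−1}. The function f_A(B) := trace((A^{−1} B A^{−*})^{1−1/ν}), where the power of the Hermitian positive semidefinite matrix A^{−1}BA^{−*} is taken via the continuous functional calculus (i.e. by applying t ↦ t^{1−1/ν} to its eigenvalues), is real-valued and concave on the set of m×m Hermitian positive semidefinite matrices B, and strictly concave on the set of Hermitian positive definite matrices B. -/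
open Matrix ComplexOrder

/-- Real power of a matrix via the continuous functional calculus: for a Hermitian
positive semidefinite `S = UΛU*`, `matRPow S c = U Λ^c U*` (junk value otherwise). -/
noncomputable def matRPow {m : ℕ} (S : Matrix (Fin m) (Fin m) ℂ) (c : ℝ) :
    Matrix (Fin m) (Fin m) ℂ :=
  cfc (fun t : ℝ => t ^ c) S

/-!
For `Z = a • X + b • Y`, let `V` diagonalise `Z` and let `dX`, `dY` be the (real) diagonals of
`Vᴴ X V` and `Vᴴ Y V`, so that the eigenvalues of `Z` are `a • dX + b • dY`. Concavity of `f`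
gives `∑ f (a dX + b dY) ≥ a ∑ f dX + b ∑ f dY`, and Peierls' inequality
`∑ f (eigenvalues X) ≤ ∑ f dX` finishes: if `U` diagonalises `X`, then `dX` is the image of the
eigenvalues of `X` under the doubly stochastic matrix `|Vᴴ U|²`, so this is Jensen's inequality
row by row. Under strict concavity, equality in Peierls' inequality forces `Vᴴ X V` and `Vᴴ Y V`
to be diagonal, and equality in the pointwise step forces `dX = dY`; hence `X = Y`.
Finally `B ↦ A⁻¹ B A⁻ᴴ` is an injective linear map preserving positive semidefiniteness.
-/

open Finset

section DoublyStochastic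

variable {n : Type*} [Fintype n] [DecidableEq n] {s : Set ℝ} {f : ℝ → ℝ} {P : Matrix n n ℝ}
  {x : n → ℝ}

theorem Matrix.sum_eq_sum_sum_smul_of_mem_doublyStochastic (hP : P ∈ doublyStochastic ℝ n)
    (g : n → ℝ) : ∑ j, g j = ∑ i, ∑ j, P i j • g j := by
  rw [Finset.sum_comm]
  simp_rw [← Finset.sum_smul, sum_col_of_mem_doublyStochastic hP, one_smul]

theorem ConcaveOn.sum_map_le_sum_map_mulVec (hf : ConcaveOn ℝ s f)
    (hP : P ∈ doublyStochastic ℝ n) (hx : ∀ j, x j ∈ s) :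
    ∑ j, f (x j) ≤ ∑ i, f ((P *ᵥ x) i) := by
  rw [sum_eq_sum_sum_smul_of_mem_doublyStochastic hP]
  exact sum_le_sum fun i _ => hf.le_map_sum (fun j _ => nonneg_of_mem_doublyStochastic hP)
    (sum_row_of_mem_doublyStochastic hP i) fun j _ => hx j

theorem StrictConcaveOn.eq_mulVec_apply_of_sum_map_eq (hf : StrictConcaveOn ℝ s f)
    (hP : P ∈ doublyStochastic ℝ n) (hx : ∀ j, x j ∈ s)
    (h : ∑ i, f ((P *ᵥ x) i) = ∑ j, f (x j)) {i j : n} (hij : P i j ≠ 0) :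
    x j = (P *ᵥ x) i := by
  have hrow : ∑ j, P i j • f (x j) = f ((P *ᵥ x) i) := by
    refine (sum_eq_sum_iff_of_le fun i _ => hf.concaveOn.le_map_sum
      (fun j _ => nonneg_of_mem_doublyStochastic hP) (sum_row_of_mem_doublyStochastic hP i)
      fun j _ => hx j).1 ?_ i (mem_univ i)
    rw [← sum_eq_sum_sum_smul_of_mem_doublyStochastic hP]
    exact h.symm
  exact (hf.map_sum_eq_iff' (fun j _ => nonneg_of_mem_doublyStochastic hP)
    (sum_row_of_mem_doublyStochastic hP i) fun j _ => hx j).1 hrow.symm j (mem_univ j) hij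

end DoublyStochastic

namespace Matrix

variable {n : Type*} {𝕜 : Type*} [RCLike 𝕜]

theorem convex_setOf_posSemidef : Convex ℝ {X : Matrix n n 𝕜 | X.PosSemidef} :=
  fun _ hX _ hY _ _ ha hb _ => (hX.smul ha).add (hY.smul hb)

theorem IsHermitian.eq_of_isDiag [DecidableEq n] {M N : Matrix n n 𝕜} (hM : M.IsHermitian)
    (hN : N.IsHermitian) (hMd : M.IsDiag) (hNd : N.IsDiag)
    (h : ∀ i, RCLike.re (M i i) = RCLike.re (N i i)) :
    M = N := by
  rw [← hMd.diagonal_diag, ← hNd.diagonal_diag]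
  congr 1
  funext i
  rw [diag_apply, diag_apply, ← hM.coe_re_apply_self, ← hN.coe_re_apply_self, h i]

variable [Fintype n]

theorem PosSemidef.re_conjTranspose_mul_mul_apply_self_nonneg {X : Matrix n n 𝕜}
    (hX : X.PosSemidef) (V : Matrix n n 𝕜) (i : n) : 0 ≤ RCLike.re ((Vᴴ * X * V) i i) :=
  (RCLike.nonneg_iff.1 (hX.conjTranspose_mul_mul_same V).diag_nonneg).1

variable [DecidableEq n]

theorem of_norm_sq_mem_doublyStochastic {W : Matrix n n 𝕜} (hW : W ∈ unitaryGroup n 𝕜) :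
    (of fun i j => ‖W i j‖ ^ 2) ∈ doublyStochastic ℝ n := by
  have hrow (i : n) : ∑ j, ‖W i j‖ ^ 2 = 1 := by
    have h := congrFun₂ (mem_unitaryGroup_iff.1 hW) i i
    simp only [mul_apply, star_apply, RCLike.star_def, RCLike.mul_conj, one_apply_eq] at h
    exact_mod_cast h
  have hcol (j : n) : ∑ i, ‖W i j‖ ^ 2 = 1 := by
    have h := congrFun₂ (mem_unitaryGroup_iff'.1 hW) j j
    simp only [mul_apply, star_apply, RCLike.star_def, RCLike.conj_mul, one_apply_eq] at h
    exact_mod_cast h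
  exact mem_doublyStochastic_iff_sum.2 ⟨fun _ _ => sq_nonneg _, hrow, hcol⟩

theorem mul_diagonal_mul_conjTranspose_apply_self (W : Matrix n n 𝕜) (μ : n → ℝ) (i : n) :
    (W * diagonal (RCLike.ofReal ∘ μ) * Wᴴ : Matrix n n 𝕜) i i =
      (((of fun i j => ‖W i j‖ ^ 2) *ᵥ μ) i : 𝕜) := by
  rw [mul_apply]
  simp only [mul_diagonal, conjTranspose_apply, mulVec, dotProduct, of_apply,
    Function.comp_apply, RCLike.ofReal_sum, RCLike.ofReal_mul, RCLike.ofReal_pow]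
  refine sum_congr rfl fun j _ => ?_
  rw [← RCLike.mul_conj, RCLike.star_def]
  ring

theorem mul_diagonal_mul_conjTranspose_eq_diagonal {W : Matrix n n 𝕜} (hW : W ∈ unitaryGroup n 𝕜)
    {μ c : n → ℝ} (h : ∀ i j, W i j ≠ 0 → μ j = c i) :
    W * diagonal (RCLike.ofReal ∘ μ) * Wᴴ = diagonal (RCLike.ofReal ∘ c) := by
  have hcomm : W * diagonal (RCLike.ofReal ∘ μ) = diagonal (RCLike.ofReal ∘ c) * W := by
    ext i j
    rw [mul_diagonal, diagonal_mul]
    by_cases hij : W i j = 0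
    · simp [hij]
    · simp [h i j hij, mul_comm]
  rw [hcomm, Matrix.mul_assoc, ← star_eq_conjTranspose, mem_unitaryGroup_iff.1 hW, mul_one]

variable {s : Set ℝ} {f : ℝ → ℝ} {X Y V : Matrix n n 𝕜}

theorem eq_of_conjTranspose_mul_mul_eq (hV : V ∈ unitaryGroup n 𝕜)
    (h : Vᴴ * X * V = Vᴴ * Y * V) : X = Y :=
  EquivLike.injective (Unitary.conjStarAlgAut 𝕜 (Matrix n n 𝕜) (star ⟨V, hV⟩)) <| by
    rwa [Unitary.conjStarAlgAut_star_apply, Unitary.conjStarAlgAut_star_apply]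

theorem IsHermitian.conjTranspose_mul_mul_eq (hX : X.IsHermitian) (V : Matrix n n 𝕜) :
    Vᴴ * X * V = (Vᴴ * (hX.eigenvectorUnitary : Matrix n n 𝕜)) *
      diagonal (RCLike.ofReal ∘ hX.eigenvalues) *
      (Vᴴ * (hX.eigenvectorUnitary : Matrix n n 𝕜))ᴴ := by
  conv_lhs => rw [hX.spectral_theorem, Unitary.conjStarAlgAut_apply]
  simp only [conjTranspose_mul, conjTranspose_conjTranspose, star_eq_conjTranspose,
    Matrix.mul_assoc]

theorem IsHermitian.sum_map_eigenvalues_le (hf : ConcaveOn ℝ s f) (hX : X.IsHermitian)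
    (hs : ∀ j, hX.eigenvalues j ∈ s) (hV : V ∈ unitaryGroup n 𝕜) :
    ∑ j, f (hX.eigenvalues j) ≤ ∑ i, f (RCLike.re ((Vᴴ * X * V) i i)) := by
  simp only [hX.conjTranspose_mul_mul_eq V, mul_diagonal_mul_conjTranspose_apply_self,
    RCLike.ofReal_re]
  exact hf.sum_map_le_sum_map_mulVec
    (of_norm_sq_mem_doublyStochastic (mul_mem (Unitary.star_mem hV) (Subtype.prop _))) hs

theorem IsHermitian.sum_map_eigenvalues_lt (hf : StrictConcaveOn ℝ s f)
    (hX : X.IsHermitian) (hs : ∀ j, hX.eigenvalues j ∈ s) (hV : V ∈ unitaryGroup n 𝕜)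
    (hd : ¬(Vᴴ * X * V).IsDiag) :
    ∑ j, f (hX.eigenvalues j) < ∑ i, f (RCLike.re ((Vᴴ * X * V) i i)) := by
  refine (hX.sum_map_eigenvalues_le hf.concaveOn hs hV).lt_of_ne fun h => hd ?_
  set W := Vᴴ * (hX.eigenvectorUnitary : Matrix n n 𝕜)
  have hW : W ∈ unitaryGroup n 𝕜 := mul_mem (Unitary.star_mem hV) (Subtype.prop _)
  simp only [hX.conjTranspose_mul_mul_eq V, mul_diagonal_mul_conjTranspose_apply_self,
    RCLike.ofReal_re] at h ⊢
  rw [mul_diagonal_mul_conjTranspose_eq_diagonal hW fun i j hij =>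
    hf.eq_mulVec_apply_of_sum_map_eq (of_norm_sq_mem_doublyStochastic hW) hs h.symm
      (by simpa using hij)]
  exact isDiag_diagonal _

theorem IsHermitian.trace_cfc (hX : X.IsHermitian) (f : ℝ → ℝ) :
    trace (cfc f X) = ((∑ i, f (hX.eigenvalues i) : ℝ) : 𝕜) := by
  rw [hX.cfc_eq, IsHermitian.cfc, Unitary.conjStarAlgAut_apply, trace_mul_cycle,
    UnitaryGroup.star_mul_self, one_mul, trace_diagonal]
  simp

theorem IsHermitian.eigenvalues_smul_add_smul {a b : ℝ} (hZ : (a • X + b • Y).IsHermitian)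
    (i : n) : hZ.eigenvalues i =
      a * RCLike.re
          (((hZ.eigenvectorUnitary : Matrix n n 𝕜)ᴴ * X * hZ.eigenvectorUnitary) i i) +
        b * RCLike.re
          (((hZ.eigenvectorUnitary : Matrix n n 𝕜)ᴴ * Y * hZ.eigenvectorUnitary) i i) := by
  have h := congrArg RCLike.re <| congrFun₂ hZ.conjStarAlgAut_star_eigenvectorUnitary i i
  rw [Unitary.conjStarAlgAut_star_apply, diagonal_apply_eq] at h
  simp only [Matrix.mul_add, Matrix.add_mul, Matrix.mul_smul, Matrix.smul_mul, add_apply,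
    smul_apply, map_add, RCLike.smul_re, Function.comp_apply, RCLike.ofReal_re] at h
  rw [← h]
  rfl

theorem concaveOn_re_trace_cfc (hf : ConcaveOn ℝ (Set.Ici 0) f) :
    ConcaveOn ℝ {X : Matrix n n 𝕜 | X.PosSemidef} fun X => RCLike.re (trace (cfc f X)) := by
  refine ⟨convex_setOf_posSemidef, fun X hX Y hY a b ha hb hab => ?_⟩
  have hZ := (convex_setOf_posSemidef hX hY ha hb hab).isHermitian
  set V := (hZ.eigenvectorUnitary : Matrix n n 𝕜)
  have hV : V ∈ unitaryGroup n 𝕜 := Subtype.prop _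
  have hXV := hX.1.sum_map_eigenvalues_le hf hX.eigenvalues_nonneg hV
  have hYV := hY.1.sum_map_eigenvalues_le hf hY.eigenvalues_nonneg hV
  have hpoint (i : n) : a * f (RCLike.re ((Vᴴ * X * V) i i)) +
      b * f (RCLike.re ((Vᴴ * Y * V) i i)) ≤ f (hZ.eigenvalues i) := by
    rw [hZ.eigenvalues_smul_add_smul i]
    exact hf.2 (hX.re_conjTranspose_mul_mul_apply_self_nonneg V i)
      (hY.re_conjTranspose_mul_mul_apply_self_nonneg V i) ha hb hab
  have hle := sum_le_sum fun i (_ : i ∈ univ) => hpoint i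
  rw [sum_add_distrib, ← mul_sum, ← mul_sum] at hle
  simp only [hX.isHermitian.trace_cfc, hY.isHermitian.trace_cfc, hZ.trace_cfc,
    RCLike.ofReal_re, smul_eq_mul]
  linarith [mul_le_mul_of_nonneg_left hXV ha, mul_le_mul_of_nonneg_left hYV hb]

theorem strictConcaveOn_re_trace_cfc (hf : StrictConcaveOn ℝ (Set.Ici 0) f) :
    StrictConcaveOn ℝ {X : Matrix n n 𝕜 | X.PosSemidef} fun X => RCLike.re (trace (cfc f X)) := by
  refine ⟨convex_setOf_posSemidef, fun X hX Y hY hXY a b ha hb hab => ?_⟩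
  have hZ := (convex_setOf_posSemidef hX hY ha.le hb.le hab).isHermitian
  set V := (hZ.eigenvectorUnitary : Matrix n n 𝕜)
  have hV : V ∈ unitaryGroup n 𝕜 := Subtype.prop _
  have hX0 := hX.re_conjTranspose_mul_mul_apply_self_nonneg V
  have hY0 := hY.re_conjTranspose_mul_mul_apply_self_nonneg V
  have hXV := hX.1.sum_map_eigenvalues_le hf.concaveOn hX.eigenvalues_nonneg hV
  have hYV := hY.1.sum_map_eigenvalues_le hf.concaveOn hY.eigenvalues_nonneg hV
  have hpoint (i : n) : a * f (RCLike.re ((Vᴴ * X * V) i i)) +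
      b * f (RCLike.re ((Vᴴ * Y * V) i i)) ≤ f (hZ.eigenvalues i) := by
    rw [hZ.eigenvalues_smul_add_smul i]
    exact hf.concaveOn.2 (hX0 i) (hY0 i) ha.le hb.le hab
  simp only [hX.isHermitian.trace_cfc, hY.isHermitian.trace_cfc, hZ.trace_cfc,
    RCLike.ofReal_re, smul_eq_mul]
  by_cases hdiag : (Vᴴ * X * V).IsDiag ∧ (Vᴴ * Y * V).IsDiag
  · obtain ⟨i, hi⟩ : ∃ i, RCLike.re ((Vᴴ * X * V) i i) ≠ RCLike.re ((Vᴴ * Y * V) i i) := by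
      by_contra! h
      exact hXY <| eq_of_conjTranspose_mul_mul_eq hV <|
        (isHermitian_conjTranspose_mul_mul V hX.1).eq_of_isDiag
          (isHermitian_conjTranspose_mul_mul V hY.1) hdiag.1 hdiag.2 h
    have hlt := sum_lt_sum (fun i _ => hpoint i) ⟨i, mem_univ i, by
      rw [hZ.eigenvalues_smul_add_smul i]
      exact hf.2 (hX0 i) (hY0 i) hi ha hb hab⟩
    rw [sum_add_distrib, ← mul_sum, ← mul_sum] at hlt
    linarith [mul_le_mul_of_nonneg_left hXV ha.le, mul_le_mul_of_nonneg_left hYV hb.le]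
  · have hle := sum_le_sum fun i (_ : i ∈ univ) => hpoint i
    rw [sum_add_distrib, ← mul_sum, ← mul_sum] at hle
    rcases not_and_or.1 hdiag with h | h
    · linarith [mul_lt_mul_of_pos_left
        (hX.1.sum_map_eigenvalues_lt hf hX.eigenvalues_nonneg hV h) ha,
        mul_le_mul_of_nonneg_left hYV hb.le]
    · linarith [mul_le_mul_of_nonneg_left hXV ha.le, mul_lt_mul_of_pos_left
        (hY.1.sum_map_eigenvalues_lt hf hY.eigenvalues_nonneg hV h) hb]

end Matrix

theorem concave_trace_rpow_congruence_general
    {m : ℕ} (ν : ℕ) (hν : 2 ≤ ν)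
    (A : Matrix (Fin m) (Fin m) ℂ) (hA : IsUnit A.det) :
    -- real-valued on Hermitian positive semidefinite matrices
    (∀ B : Matrix (Fin m) (Fin m) ℂ, B.PosSemidef →
      (Matrix.trace (matRPow (A⁻¹ * B * (Aᴴ)⁻¹) (1 - 1 / (ν : ℝ)))).im = 0) ∧
    -- concave on Hermitian positive semidefinite matrices
    (∀ B₁ B₂ : Matrix (Fin m) (Fin m) ℂ, B₁.PosSemidef → B₂.PosSemidef →
      ∀ t : ℝ, t ∈ Set.Icc (0 : ℝ) 1 →
        t * (Matrix.trace (matRPow (A⁻¹ * B₁ * (Aᴴ)⁻¹) (1 - 1 / (ν : ℝ)))).re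
          + (1 - t) * (Matrix.trace (matRPow (A⁻¹ * B₂ * (Aᴴ)⁻¹) (1 - 1 / (ν : ℝ)))).re
        ≤ (Matrix.trace (matRPow
            (A⁻¹ * ((t : ℂ) • B₁ + ((1 - t : ℝ) : ℂ) • B₂) * (Aᴴ)⁻¹)
            (1 - 1 / (ν : ℝ)))).re) ∧
    -- strictly concave on Hermitian positive definite matrices
    (∀ B₁ B₂ : Matrix (Fin m) (Fin m) ℂ, B₁.PosDef → B₂.PosDef → B₁ ≠ B₂ →
      ∀ t : ℝ, t ∈ Set.Ioo (0 : ℝ) 1 →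
        t * (Matrix.trace (matRPow (A⁻¹ * B₁ * (Aᴴ)⁻¹) (1 - 1 / (ν : ℝ)))).re
          + (1 - t) * (Matrix.trace (matRPow (A⁻¹ * B₂ * (Aᴴ)⁻¹) (1 - 1 / (ν : ℝ)))).re
        < (Matrix.trace (matRPow
            (A⁻¹ * ((t : ℂ) • B₁ + ((1 - t : ℝ) : ℂ) • B₂) * (Aᴴ)⁻¹)
            (1 - 1 / (ν : ℝ)))).re) := by
  have hν' : (2 : ℝ) ≤ ν := by exact_mod_cast hν
  have hf : StrictConcaveOn ℝ (Set.Ici 0) fun t : ℝ => t ^ (1 - 1 / (ν : ℝ)) :=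
    Real.strictConcaveOn_rpow (by rw [sub_pos, div_lt_one] <;> linarith)
      (sub_lt_self _ (by positivity))
  have hcongr (B : Matrix (Fin m) (Fin m) ℂ) (hB : B.PosSemidef) :
      (A⁻¹ * B * (Aᴴ)⁻¹).PosSemidef := by
    simpa only [conjTranspose_nonsing_inv] using hB.mul_mul_conjTranspose_same A⁻¹
  have hAinv : IsUnit A⁻¹ := isUnit_nonsing_inv_iff.2 ((isUnit_iff_isUnit_det A).2 hA)
  have hAinv' : IsUnit (Aᴴ)⁻¹ := by
    rw [← conjTranspose_nonsing_inv]
    exact hAinv.star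
  have hlin (t : ℝ) (B₁ B₂ : Matrix (Fin m) (Fin m) ℂ) :
      A⁻¹ * ((t : ℂ) • B₁ + ((1 - t : ℝ) : ℂ) • B₂) * (Aᴴ)⁻¹ =
        t • (A⁻¹ * B₁ * (Aᴴ)⁻¹) + (1 - t) • (A⁻¹ * B₂ * (Aᴴ)⁻¹) := by
    simp only [Complex.coe_smul, Matrix.mul_add, Matrix.add_mul, Matrix.mul_smul, Matrix.smul_mul]
  refine ⟨fun B hB => ?_, fun B₁ B₂ h₁ h₂ t ht => ?_, fun B₁ B₂ h₁ h₂ hne t ht => ?_⟩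
  · rw [matRPow, (hcongr B hB).isHermitian.trace_cfc]
    exact Complex.ofReal_im _
  · rw [hlin]
    exact (concaveOn_re_trace_cfc hf.concaveOn).2 (hcongr _ h₁) (hcongr _ h₂) ht.1
      (sub_nonneg.2 ht.2) (add_sub_cancel _ _)
  · rw [hlin]
    exact (strictConcaveOn_re_trace_cfc hf).2 (hcongr _ h₁.posSemidef) (hcongr _ h₂.posSemidef)
      (fun h => hne (hAinv.mul_left_cancel (hAinv'.mul_right_cancel h))) ht.1 (sub_pos.2 ht.2)
      (add_sub_cancel _ _)

/-- **Concavity of `B ↦ trace((A⁻¹ B A⁻*)^{1−1/ν})`.**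
Let `ν ≥ 2` be an integer and `A` a nonsingular `m × m` complex matrix. The function
`f_A(B) := trace((A⁻¹ B A^{-*})^{1−1/ν})` (matrix power via the continuous functional
calculus) is real-valued on Hermitian positive semidefinite matrices `B`, is concave
there, and is strictly concave on Hermitian positive definite matrices. -/
theorem concave_trace_rpow_congruence
    {m : ℕ} (hm : 1 ≤ m) (ν : ℕ) (hν : 2 ≤ ν)
    (A : Matrix (Fin m) (Fin m) ℂ) (hA : IsUnit A.det) :
    -- real-valued on Hermitian positive semidefinite matrices
    (∀ B : Matrix (Fin m) (Fin m) ℂ, B.PosSemidef →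
      (Matrix.trace (matRPow (A⁻¹ * B * (Aᴴ)⁻¹) (1 - 1 / (ν : ℝ)))).im = 0) ∧
    -- concave on Hermitian positive semidefinite matrices
    (∀ B₁ B₂ : Matrix (Fin m) (Fin m) ℂ, B₁.PosSemidef → B₂.PosSemidef →
      ∀ t : ℝ, t ∈ Set.Icc (0 : ℝ) 1 →
        t * (Matrix.trace (matRPow (A⁻¹ * B₁ * (Aᴴ)⁻¹) (1 - 1 / (ν : ℝ)))).re
          + (1 - t) * (Matrix.trace (matRPow (A⁻¹ * B₂ * (Aᴴ)⁻¹) (1 - 1 / (ν : ℝ)))).re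
        ≤ (Matrix.trace (matRPow
            (A⁻¹ * ((t : ℂ) • B₁ + ((1 - t : ℝ) : ℂ) • B₂) * (Aᴴ)⁻¹)
            (1 - 1 / (ν : ℝ)))).re) ∧
    -- strictly concave on Hermitian positive definite matrices
    (∀ B₁ B₂ : Matrix (Fin m) (Fin m) ℂ, B₁.PosDef → B₂.PosDef → B₁ ≠ B₂ →
      ∀ t : ℝ, t ∈ Set.Ioo (0 : ℝ) 1 →
        t * (Matrix.trace (matRPow (A⁻¹ * B₁ * (Aᴴ)⁻¹) (1 - 1 / (ν : ℝ)))).re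
          + (1 - t) * (Matrix.trace (matRPow (A⁻¹ * B₂ * (Aᴴ)⁻¹) (1 - 1 / (ν : ℝ)))).re
        < (Matrix.trace (matRPow
            (A⁻¹ * ((t : ℂ) • B₁ + ((1 - t : ℝ) : ℂ) • B₂) * (Aᴴ)⁻¹)
            (1 - 1 / (ν : ℝ)))).re) :=
  concave_trace_rpow_congruence_general ν hν A hA
end

section
/- Let ν ≥ 2 be an integer, Ψ₀ an m×m Hermitian positive definite matrix factored as Ψ₀ = W·W^* with W nonsingular, and R an m×m Hermitian positive definite matrix. Then the real-valued function B ↦ (ν²/(1−ν))·trace((W^{−1} B W^{−*})^{1−1/ν}) + ν·trace(R·B), defined on m×m Hermitian positive semidefinite matrices B (matrix power via continuous functional calculus), attains its minimum at the unique minimizer B° = Ψ₀·(R·Ψ₀)^{−ν}. -/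
/-!
With `M = Wᴴ R W` and `A = W⁻¹ B W⁻ᴴ` the objective is `ν (tr f(A) + tr(M A))` for
`f x = ν/(1-ν) · x^(1-1/ν)`, and `B°` corresponds to `A° = M^(-ν)`. In eigenbases `A = U diag λ U*`,
`M = V diag μ V*`, every trace involved is a sum over pairs `(λᵢ, μⱼ)` weighted by `|(V*U)ⱼᵢ|²`,
a doubly stochastic matrix. Hence the pointwise weighted AM–GM inequality
`μ^(1-ν)/(1-ν) ≤ f λ + μ λ`, with equality only at `λ = μ^(-ν)`, gives the lower bound
`tr(M^(1-ν))/(1-ν) ≤ tr f(A) + tr(M A)`; equality forces `(V*U)ⱼᵢ = 0` unless `λᵢ = μⱼ^(-ν)`,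
which says exactly that `A = M^(-ν)`.
-/

open Matrix ComplexOrder

/-- The pointwise objective
`B ↦ (ν²/(1−ν))·trace((W⁻¹ B W⁻*)^{1−1/ν}) + ν·trace(R·B)` (real value). -/
noncomputable def pointObj {m : ℕ} (ν : ℕ) (W R B : Matrix (Fin m) (Fin m) ℂ) : ℝ :=
  ((ν : ℝ) ^ 2 / (1 - (ν : ℝ))) *
      (Matrix.trace (matRPow (W⁻¹ * B * (Wᴴ)⁻¹) (1 - 1 / (ν : ℝ)))).re
    + (ν : ℝ) * (Matrix.trace (R * B)).re

section RpowAMGM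

variable {q x y : ℝ}

lemma rpow_one_sub_one_div_eq_geom_mean (hq : 0 < q) (hx : 0 ≤ x) (hy : 0 < y) :
    x ^ (1 - 1 / q) = (y * x) ^ (1 - 1 / q) * (y ^ (1 - q)) ^ (1 / q) := by
  rw [Real.mul_rpow hy.le hx, ← Real.rpow_mul hy.le, mul_right_comm, ← Real.rpow_add hy]
  have : 1 - 1 / q + (1 - q) * (1 / q) = 0 := by field_simp; ring
  rw [this, Real.rpow_zero, one_mul]

lemma rpow_gap_eq_mul_amgm_gap (hq : 1 < q) (hx : 0 ≤ x) (hy : 0 < y) :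
    q / (1 - q) * x ^ (1 - 1 / q) + y * x - 1 / (1 - q) * y ^ (1 - q)
      = q / (q - 1) * ((1 - 1 / q) * (y * x) + 1 / q * y ^ (1 - q)
          - (y * x) ^ (1 - 1 / q) * (y ^ (1 - q)) ^ (1 / q)) := by
  rw [← rpow_one_sub_one_div_eq_geom_mean (by linarith) hx hy]
  have : q - 1 ≠ 0 := by linarith
  have : 1 - q ≠ 0 := by linarith
  field_simp
  ring

lemma one_sub_one_div_pos (hq : 1 < q) : 0 < 1 - 1 / q := by
  rw [sub_pos, div_lt_one (by linarith)]
  exact hq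

lemma one_div_one_sub_mul_rpow_le (hq : 1 < q) (hx : 0 ≤ x) (hy : 0 < y) :
    1 / (1 - q) * y ^ (1 - q) ≤ q / (1 - q) * x ^ (1 - 1 / q) + y * x := by
  have amgm := Real.geom_mean_le_arith_mean2_weighted (one_sub_one_div_pos hq).le
    (by positivity) (mul_nonneg hy.le hx) (Real.rpow_nonneg hy.le (1 - q)) (sub_add_cancel 1 _)
  have : 0 ≤ q / (q - 1) := div_nonneg (by linarith) (by linarith)
  nlinarith [rpow_gap_eq_mul_amgm_gap hq hx hy]

lemma one_div_one_sub_mul_rpow_eq_iff (hq : 1 < q) (hx : 0 ≤ x) (hy : 0 < y) :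
    1 / (1 - q) * y ^ (1 - q) = q / (1 - q) * x ^ (1 - 1 / q) + y * x ↔ x = y ^ (-q) := by
  have amgm := Real.geom_mean_eq_arith_mean2_weighted_iff_of_pos (one_sub_one_div_pos hq)
    (by positivity) (mul_nonneg hy.le hx) (Real.rpow_nonneg hy.le (1 - q)) (sub_add_cancel 1 _)
  have hy1 : y ^ (1 - q) = y * y ^ (-q) := by
    rw [sub_eq_add_neg, Real.rpow_add hy, Real.rpow_one]
  have hq' : q / (q - 1) ≠ 0 := div_ne_zero (by linarith) (by linarith)
  rw [eq_comm, ← sub_eq_zero, rpow_gap_eq_mul_amgm_gap hq hx hy, mul_eq_zero, or_iff_right hq',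
    sub_eq_zero, eq_comm, amgm, hy1, mul_right_inj' hy.ne']

end RpowAMGM

lemma Unitary.conj_eq_conj_iff {R : Type*} [Monoid R] [StarMul R] (U V : unitary R) (X Y : R) :
    (U : R) * X * star (U : R) = V * Y * star (V : R) ↔
      star (V : R) * U * X = Y * (star (V : R) * U) := by
  constructor
  · intro h
    calc star (V : R) * U * X = star (V : R) * (U * X * star (U : R)) * U := by
          simp [mul_assoc]
      _ = Y * (star (V : R) * U) := by
          rw [h]; simp [← mul_assoc]
  · intro h
    calc (U : R) * X * star (U : R) = V * (star (V : R) * U * X) * star (U : R) := by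
          simp [← mul_assoc]
      _ = V * Y * star (V : R) := by
          rw [h]; simp [mul_assoc]

namespace Matrix.IsHermitian

variable {n 𝕜 : Type*} [RCLike 𝕜] [Fintype n] [DecidableEq n] {A M : Matrix n n 𝕜}

noncomputable def eigenOverlap (hA : A.IsHermitian) (hM : M.IsHermitian) : Matrix n n 𝕜 :=
  (star hM.eigenvectorUnitary : Matrix n n 𝕜) * hA.eigenvectorUnitary

lemma cfc_eq_conj (hA : A.IsHermitian) (f : ℝ → ℝ) :
    cfc f A = (hA.eigenvectorUnitary : Matrix n n 𝕜) *
      diagonal (RCLike.ofReal ∘ f ∘ hA.eigenvalues) *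
      (star hA.eigenvectorUnitary : Matrix n n 𝕜) := by
  rw [hA.cfc_eq]; rfl

lemma trace_cfc_mul_cfc (hA : A.IsHermitian) (hM : M.IsHermitian) (f g : ℝ → ℝ) :
    trace (cfc g M * cfc f A) = ∑ j, ∑ i,
      ((‖eigenOverlap hA hM j i‖ ^ 2 * (g (hM.eigenvalues j) * f (hA.eigenvalues i)) : ℝ) : 𝕜) := by
  set U : Matrix n n 𝕜 := ↑hA.eigenvectorUnitary
  set V : Matrix n n 𝕜 := ↑hM.eigenvectorUnitary
  have hC : star (eigenOverlap hA hM) = star U * V := by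
    simp [eigenOverlap, star_mul, U, V]
  set Dg : Matrix n n 𝕜 := diagonal (RCLike.ofReal ∘ g ∘ hM.eigenvalues)
  set Df : Matrix n n 𝕜 := diagonal (RCLike.ofReal ∘ f ∘ hA.eigenvalues)
  calc trace (cfc g M * cfc f A) = trace (V * (Dg * star V * U * Df * star U)) := by
        rw [cfc_eq_conj hA, cfc_eq_conj hM]; simp only [Matrix.mul_assoc]; rfl
    _ = trace (Dg * eigenOverlap hA hM * Df * star (eigenOverlap hA hM)) := by
        rw [trace_mul_comm, hC, eigenOverlap]; simp only [Matrix.mul_assoc]; rfl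
    _ = _ := by
        refine Finset.sum_congr rfl fun j _ ↦ ?_
        rw [diag_apply, mul_apply]
        refine Finset.sum_congr rfl fun i _ ↦ ?_
        simp only [Dg, Df, mul_diagonal, diagonal_mul, star_apply, Function.comp_apply]
        rw [RCLike.ofReal_mul, RCLike.ofReal_pow, ← RCLike.mul_conj, RCLike.star_def,
          RCLike.ofReal_mul]
        ring

lemma cfc_eq_cfc_iff (hA : A.IsHermitian) (hM : M.IsHermitian) (f g : ℝ → ℝ) :
    cfc f A = cfc g M ↔
      ∀ j i, eigenOverlap hA hM j i = 0 ∨ f (hA.eigenvalues i) = g (hM.eigenvalues j) := by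
  rw [cfc_eq_conj hA, cfc_eq_conj hM, Unitary.conj_eq_conj_iff, ← eigenOverlap, ← Matrix.ext_iff]
  simp only [mul_diagonal, diagonal_mul, Function.comp_apply]
  refine forall_congr' fun j ↦ forall_congr' fun i ↦ ?_
  rw [mul_comm (RCLike.ofReal _), mul_eq_mul_left_iff, RCLike.ofReal_inj, or_comm, eq_comm]

lemma re_trace_cfc_add_re_trace_mul_sub_re_trace_cfc (hA : A.IsHermitian) (hM : M.IsHermitian)
    (f k : ℝ → ℝ) :
    RCLike.re (trace (cfc f A)) + RCLike.re (trace (M * A)) - RCLike.re (trace (cfc k M)) =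
      ∑ j, ∑ i, ‖eigenOverlap hA hM j i‖ ^ 2 *
        (f (hA.eigenvalues i) + hM.eigenvalues j * hA.eigenvalues i - k (hM.eigenvalues j)) := by
  have hf : cfc f A = cfc (fun _ : ℝ ↦ (1 : ℝ)) M * cfc f A := by
    rw [cfc_const_one ℝ M hM.isSelfAdjoint, Matrix.one_mul]
  have hMA : M * A = cfc (id : ℝ → ℝ) M * cfc (id : ℝ → ℝ) A := by
    rw [cfc_id ℝ M hM.isSelfAdjoint, cfc_id ℝ A hA.isSelfAdjoint]
  have hk : cfc k M = cfc k M * cfc (fun _ : ℝ ↦ (1 : ℝ)) A := by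
    rw [cfc_const_one ℝ A hA.isSelfAdjoint, Matrix.mul_one]
  rw [hf, hMA, hk]
  simp only [trace_cfc_mul_cfc hA hM, map_sum, RCLike.ofReal_re, ← Finset.sum_add_distrib,
    ← Finset.sum_sub_distrib, id]
  refine Finset.sum_congr rfl fun j _ ↦ Finset.sum_congr rfl fun i _ ↦ ?_
  ring

theorem re_trace_cfc_le (hA : A.IsHermitian) (hM : M.IsHermitian) {f k : ℝ → ℝ}
    (hle : ∀ x ∈ spectrum ℝ A, ∀ y ∈ spectrum ℝ M, k y ≤ f x + y * x) :
    RCLike.re (trace (cfc k M)) ≤ RCLike.re (trace (cfc f A)) + RCLike.re (trace (M * A)) := by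
  rw [← sub_nonneg, re_trace_cfc_add_re_trace_mul_sub_re_trace_cfc hA hM]
  refine Finset.sum_nonneg fun j _ ↦ Finset.sum_nonneg fun i _ ↦ mul_nonneg (by positivity) ?_
  exact sub_nonneg.mpr (hle _ (hA.eigenvalues_mem_spectrum_real i) _
    (hM.eigenvalues_mem_spectrum_real j))

theorem re_trace_cfc_eq_iff (hA : A.IsHermitian) (hM : M.IsHermitian) {f k φ : ℝ → ℝ}
    (hle : ∀ x ∈ spectrum ℝ A, ∀ y ∈ spectrum ℝ M, k y ≤ f x + y * x)
    (heq : ∀ x ∈ spectrum ℝ A, ∀ y ∈ spectrum ℝ M, k y = f x + y * x ↔ x = φ y) :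
    RCLike.re (trace (cfc k M)) = RCLike.re (trace (cfc f A)) + RCLike.re (trace (M * A)) ↔
      A = cfc φ M := by
  have hgap (j i) : 0 ≤ ‖eigenOverlap hA hM j i‖ ^ 2 *
      (f (hA.eigenvalues i) + hM.eigenvalues j * hA.eigenvalues i - k (hM.eigenvalues j)) :=
    mul_nonneg (by positivity) (sub_nonneg.mpr (hle _ (hA.eigenvalues_mem_spectrum_real i) _
      (hM.eigenvalues_mem_spectrum_real j)))
  rw [eq_comm, ← sub_eq_zero, re_trace_cfc_add_re_trace_mul_sub_re_trace_cfc hA hM,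
    Finset.sum_eq_zero_iff_of_nonneg fun j _ ↦ Finset.sum_nonneg fun i _ ↦ hgap j i]
  conv_rhs => rw [← cfc_id ℝ A hA.isSelfAdjoint, cfc_eq_cfc_iff hA hM]
  refine forall_congr' fun j ↦ ?_
  rw [Finset.sum_eq_zero_iff_of_nonneg fun i _ ↦ hgap j i]
  simp only [Finset.mem_univ, forall_const, mul_eq_zero, pow_eq_zero_iff two_ne_zero, norm_eq_zero,
    sub_eq_zero, id]
  refine forall_congr' fun i ↦ or_congr Iff.rfl ?_
  rw [eq_comm, heq _ (hA.eigenvalues_mem_spectrum_real i) _ (hM.eigenvalues_mem_spectrum_real j)]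

end Matrix.IsHermitian

section PosDef

variable {n 𝕜 : Type*} [RCLike 𝕜] [Fintype n] [DecidableEq n] {q : ℝ} {A B M R W : Matrix n n 𝕜}

lemma Matrix.PosSemidef.nonneg_of_mem_spectrum (hA : A.PosSemidef) {x : ℝ}
    (hx : x ∈ spectrum ℝ A) : 0 ≤ x := by
  obtain ⟨i, rfl⟩ := hA.isHermitian.spectrum_real_eq_range_eigenvalues ▸ hx
  exact hA.eigenvalues_nonneg i

lemma Matrix.PosDef.pos_of_mem_spectrum (hM : M.PosDef) {y : ℝ} (hy : y ∈ spectrum ℝ M) :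
    0 < y := by
  obtain ⟨i, rfl⟩ := hM.isHermitian.spectrum_real_eq_range_eigenvalues ▸ hy
  exact hM.eigenvalues_pos i

theorem re_trace_rpow_le (hq : 1 < q) (hA : A.PosSemidef) (hM : M.PosDef) :
    RCLike.re (trace (cfc (fun y : ℝ ↦ 1 / (1 - q) * y ^ (1 - q)) M)) ≤
      RCLike.re (trace (cfc (fun x : ℝ ↦ q / (1 - q) * x ^ (1 - 1 / q)) A)) +
        RCLike.re (trace (M * A)) :=
  Matrix.IsHermitian.re_trace_cfc_le hA.isHermitian hM.isHermitian fun _ hx _ hy ↦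
    one_div_one_sub_mul_rpow_le hq (hA.nonneg_of_mem_spectrum hx) (hM.pos_of_mem_spectrum hy)

theorem re_trace_rpow_eq_iff (hq : 1 < q) (hA : A.PosSemidef) (hM : M.PosDef) :
    RCLike.re (trace (cfc (fun y : ℝ ↦ 1 / (1 - q) * y ^ (1 - q)) M)) =
      RCLike.re (trace (cfc (fun x : ℝ ↦ q / (1 - q) * x ^ (1 - 1 / q)) A)) +
        RCLike.re (trace (M * A)) ↔ A = cfc (fun y : ℝ ↦ y ^ (-q)) M :=
  Matrix.IsHermitian.re_trace_cfc_eq_iff hA.isHermitian hM.isHermitian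
    (fun _ hx _ hy ↦
      one_div_one_sub_mul_rpow_le hq (hA.nonneg_of_mem_spectrum hx) (hM.pos_of_mem_spectrum hy))
    fun _ hx _ hy ↦
      one_div_one_sub_mul_rpow_eq_iff hq (hA.nonneg_of_mem_spectrum hx) (hM.pos_of_mem_spectrum hy)

lemma Matrix.PosDef.inv_pow (hM : M.PosDef) (k : ℕ) : (M⁻¹ ^ k).PosDef :=
  (hM.inv.posSemidef.pow k).posDef_iff_isUnit.mpr (hM.inv.isUnit.pow k)

lemma Matrix.PosDef.inv_pow_eq_cfc_rpow_neg (hM : M.PosDef) (k : ℕ) :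
    M⁻¹ ^ k = cfc (fun y : ℝ ↦ y ^ (-(k : ℝ))) M := by
  calc M⁻¹ ^ k = cfc (fun y : ℝ ↦ y⁻¹) M ^ k := by
        rw [cfc_ringInverse_id M hM.isUnit hM.isHermitian.isSelfAdjoint,
          nonsing_inv_eq_ringInverse]
    _ = cfc (fun y : ℝ ↦ y⁻¹ ^ k) M :=
        (cfc_pow _ k M (M.finite_real_spectrum.continuousOn _) hM.isHermitian.isSelfAdjoint).symm
    _ = cfc (fun y : ℝ ↦ y ^ (-(k : ℝ))) M := cfc_congr fun y hy ↦ by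
        rw [Real.rpow_neg (hM.pos_of_mem_spectrum hy).le, Real.rpow_natCast, _root_.inv_pow]

lemma Matrix.isUnit_det_conjTranspose (hW : IsUnit W.det) : IsUnit Wᴴ.det := by
  rw [det_conjTranspose]
  exact hW.star

lemma mul_conjTranspose_mul_inv_pow (hW : IsUnit W.det) (k : ℕ) :
    W * Wᴴ * ((R * (W * Wᴴ))⁻¹) ^ k = W * ((Wᴴ * R * W)⁻¹) ^ k * Wᴴ := by
  have hWH := isUnit_det_conjTranspose hW
  have hsemi : SemiconjBy Wᴴ (R * (W * Wᴴ))⁻¹ (Wᴴ * R * W)⁻¹ := by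
    simp only [SemiconjBy, Matrix.mul_inv_rev, Matrix.mul_assoc,
      mul_nonsing_inv_cancel_left _ _ hWH, nonsing_inv_mul_cancel_right _ _ hWH]
  rw [Matrix.mul_assoc W, (hsemi.pow_right k).eq, ← Matrix.mul_assoc]

lemma inv_mul_mul_conjTranspose_inv_eq_iff (hW : IsUnit W.det) :
    W⁻¹ * B * Wᴴ⁻¹ = A ↔ B = W * A * Wᴴ := by
  have hWH := isUnit_det_conjTranspose hW
  constructor
  · rintro rfl
    simp only [Matrix.mul_assoc, mul_nonsing_inv_cancel_left _ _ hW, nonsing_inv_mul _ hWH,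
      Matrix.mul_one]
  · rintro rfl
    simp only [Matrix.mul_assoc, nonsing_inv_mul_cancel_left _ _ hW, mul_nonsing_inv _ hWH,
      Matrix.mul_one]

lemma Matrix.PosSemidef.inv_mul_mul_conjTranspose_inv (hB : B.PosSemidef) (W : Matrix n n 𝕜) :
    (W⁻¹ * B * Wᴴ⁻¹).PosSemidef := by
  rw [← conjTranspose_nonsing_inv]
  exact hB.mul_mul_conjTranspose_same W⁻¹

lemma Matrix.PosDef.conjTranspose_mul_mul_of_isUnit_det (hR : R.PosDef) (hW : IsUnit W.det) :
    (Wᴴ * R * W).PosDef :=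
  hR.conjTranspose_mul_mul_same <|
    mulVec_injective_iff_isUnit.mpr ((isUnit_iff_isUnit_det W).mpr hW)

lemma Matrix.PosDef.mul_mul_conjTranspose_of_isUnit_det (hA : A.PosDef) (hW : IsUnit W.det) :
    (W * A * Wᴴ).PosDef :=
  hA.mul_mul_conjTranspose_same <|
    vecMul_injective_iff_isUnit.mpr ((isUnit_iff_isUnit_det W).mpr hW)

end PosDef

section PointObj

variable {m : ℕ} {ν : ℕ} {W R B : Matrix (Fin m) (Fin m) ℂ}

noncomputable def pointObjMin (ν : ℕ) (W R : Matrix (Fin m) (Fin m) ℂ) : ℝ :=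
  ν * (trace (cfc (fun y : ℝ ↦ 1 / (1 - ν) * y ^ (1 - (ν : ℝ))) (Wᴴ * R * W))).re

lemma pointObj_eq_mul_re_trace (hW : IsUnit W.det) :
    pointObj ν W R B = ν * ((trace (cfc (fun x : ℝ ↦ ν / (1 - ν) * x ^ (1 - 1 / (ν : ℝ)))
      (W⁻¹ * B * Wᴴ⁻¹))).re + (trace (Wᴴ * R * W * (W⁻¹ * B * Wᴴ⁻¹))).re) := by
  have hWH := isUnit_det_conjTranspose hW
  have htr : trace (Wᴴ * R * W * (W⁻¹ * B * Wᴴ⁻¹)) = trace (R * B) := by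
    rw [show Wᴴ * R * W * (W⁻¹ * B * Wᴴ⁻¹) = Wᴴ * (R * B * Wᴴ⁻¹) by
      simp only [Matrix.mul_assoc, mul_nonsing_inv_cancel_left _ _ hW],
      trace_mul_comm, Matrix.mul_assoc, nonsing_inv_mul _ hWH, Matrix.mul_one]
  rw [pointObj, matRPow, cfc_const_mul _ _ _ (Matrix.finite_real_spectrum.continuousOn _),
    trace_smul, Complex.real_smul, Complex.re_ofReal_mul, htr]
  ring

theorem pointObjMin_le_pointObj (hν : 1 < ν) (hW : IsUnit W.det) (hR : R.PosDef)
    (hB : B.PosSemidef) : pointObjMin ν W R ≤ pointObj ν W R B := by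
  rw [pointObjMin, pointObj_eq_mul_re_trace hW]
  gcongr
  exact re_trace_rpow_le (by exact_mod_cast hν) (hB.inv_mul_mul_conjTranspose_inv W)
    (hR.conjTranspose_mul_mul_of_isUnit_det hW)

theorem pointObj_eq_pointObjMin_iff (hν : 1 < ν) (hW : IsUnit W.det) (hR : R.PosDef)
    (hB : B.PosSemidef) :
    pointObj ν W R B = pointObjMin ν W R ↔
      B = W * cfc (fun y : ℝ ↦ y ^ (-(ν : ℝ))) (Wᴴ * R * W) * Wᴴ := by
  have hν0 : (ν : ℝ) ≠ 0 := by positivity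
  rw [pointObjMin, pointObj_eq_mul_re_trace hW, mul_right_inj' hν0, eq_comm,
    ← inv_mul_mul_conjTranspose_inv_eq_iff hW]
  exact re_trace_rpow_eq_iff (by exact_mod_cast hν) (hB.inv_mul_mul_conjTranspose_inv W)
    (hR.conjTranspose_mul_mul_of_isUnit_det hW)

end PointObj

theorem pointObj_min_unique_general
    {m : ℕ} (ν : ℕ) (hν : 2 ≤ ν)
    (Ψ₀ W R : Matrix (Fin m) (Fin m) ℂ)
    (hW : IsUnit W.det) (hfact : Ψ₀ = W * Wᴴ)
    (hR : R.PosDef) :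
    (Ψ₀ * ((R * Ψ₀)⁻¹) ^ ν).PosDef ∧
    (∀ B : Matrix (Fin m) (Fin m) ℂ, B.PosSemidef →
      pointObj ν W R (Ψ₀ * ((R * Ψ₀)⁻¹) ^ ν) ≤ pointObj ν W R B) ∧
    (∀ B : Matrix (Fin m) (Fin m) ℂ, B.PosSemidef →
      pointObj ν W R B = pointObj ν W R (Ψ₀ * ((R * Ψ₀)⁻¹) ^ ν) →
      B = Ψ₀ * ((R * Ψ₀)⁻¹) ^ ν) := by
  have hM := hR.conjTranspose_mul_mul_of_isUnit_det hW
  have hB₀ : Ψ₀ * ((R * Ψ₀)⁻¹) ^ ν = W * (Wᴴ * R * W)⁻¹ ^ ν * Wᴴ := by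
    rw [hfact, mul_conjTranspose_mul_inv_pow hW]
  have hB₀pd : (Ψ₀ * ((R * Ψ₀)⁻¹) ^ ν).PosDef :=
    hB₀ ▸ (hM.inv_pow ν).mul_mul_conjTranspose_of_isUnit_det hW
  rw [hM.inv_pow_eq_cfc_rpow_neg] at hB₀
  have hmin : pointObj ν W R (Ψ₀ * ((R * Ψ₀)⁻¹) ^ ν) = pointObjMin ν W R :=
    (pointObj_eq_pointObjMin_iff hν hW hR hB₀pd.posSemidef).mpr hB₀
  refine ⟨hB₀pd, fun B hB ↦ hmin ▸ pointObjMin_le_pointObj hν hW hR hB, fun B hB hB' ↦ ?_⟩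
  rw [hB₀]
  exact (pointObj_eq_pointObjMin_iff hν hW hR hB).mp (hB'.trans hmin)

/-- **The unique minimizer of the pointwise Lagrangian term.**
Let `ν ≥ 2` be an integer, `Ψ₀ = W·W*` Hermitian positive definite with `W` nonsingular,
and `R` Hermitian positive definite. Then the function
`B ↦ (ν²/(1−ν))·trace((W⁻¹ B W⁻*)^{1−1/ν}) + ν·trace(R·B)` on Hermitian positive
semidefinite matrices attains its minimum at the unique minimizer
`B° = Ψ₀·(R·Ψ₀)^{−ν}` (which is Hermitian positive definite). -/
theorem pointObj_min_unique
    {m : ℕ} (hm : 1 ≤ m) (ν : ℕ) (hν : 2 ≤ ν)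
    (Ψ₀ W R : Matrix (Fin m) (Fin m) ℂ)
    (hΨ₀ : Ψ₀.PosDef) (hW : IsUnit W.det) (hfact : Ψ₀ = W * Wᴴ)
    (hR : R.PosDef) :
    (Ψ₀ * ((R * Ψ₀)⁻¹) ^ ν).PosDef ∧
    (∀ B : Matrix (Fin m) (Fin m) ℂ, B.PosSemidef →
      pointObj ν W R (Ψ₀ * ((R * Ψ₀)⁻¹) ^ ν) ≤ pointObj ν W R B) ∧
    (∀ B : Matrix (Fin m) (Fin m) ℂ, B.PosSemidef →
      pointObj ν W R B = pointObj ν W R (Ψ₀ * ((R * Ψ₀)⁻¹) ^ ν) →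
      B = Ψ₀ * ((R * Ψ₀)⁻¹) ^ ν) :=
  pointObj_min_unique_general ν hν Ψ₀ W R hW hfact hR
end

section
/- Assume the feasibility assumption holds with density Φ₀, and set α := −ν·∫_{𝕋^d} trace(Ψ(e^{iθ})^{−1}·Φ₀(θ)) dμ(θ). Then for every dual variable Q ∈ ℒ₊ one has ⟨Q,Σ⟩ ≥ α, and consequently J_ν(Q) ≥ ⟨Q,Σ⟩ ≥ α; in particular J_ν is bounded from below on ℒ₊. -/
open Matrix MeasureTheory ComplexOrder ENNReal
noncomputable section

/-- The fundamental domain `(−π, π]^d` of the `d`-torus `𝕋^d`. -/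
def torusSet (d : ℕ) : Set (Fin d → ℝ) :=
  Set.univ.pi fun _ => Set.Ioc (-Real.pi) Real.pi

/-- The normalized Lebesgue measure `dμ(θ) = (2π)^{−d} dθ₁⋯dθ_d` on `𝕋^d = (−π, π]^d`. -/
def torusMeasure (d : ℕ) : Measure (Fin d → ℝ) :=
  (ENNReal.ofReal ((2 * Real.pi) ^ d))⁻¹ • volume.restrict (torusSet d)

/-- `e^{i⟨k,θ⟩}` where `⟨k,θ⟩ = Σ_j k_j θ_j`. -/
def eik {d : ℕ} (k : Fin d → ℤ) (θ : Fin d → ℝ) : ℂ :=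
  Complex.exp (Complex.I * ∑ j, (k j : ℂ) * (θ j : ℂ))

/-- The matrix trigonometric polynomial `Q(e^{iθ}) = Σ_{k∈Λ} Q_k e^{−i⟨k,θ⟩}`. -/
def trigPoly {d m : ℕ} (Λ : Finset (Fin d → ℤ))
    (Q : (Fin d → ℤ) → Matrix (Fin m) (Fin m) ℂ) (θ : Fin d → ℝ) :
    Matrix (Fin m) (Fin m) ℂ :=
  ∑ k ∈ Λ, eik (-k) θ • Q k

/-- A dual variable: a family `{Q_k}` with the Hermitian symmetry `Q_{−k} = Q_k^*`. -/
def IsDualVar {d m : ℕ} (Q : (Fin d → ℤ) → Matrix (Fin m) (Fin m) ℂ) : Prop :=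
  ∀ k, Q (-k) = (Q k)ᴴ

/-- The index set `Λ` is finite (a `Finset`), contains `0`, and is symmetric. -/
def IsIndexSet {d : ℕ} (Λ : Finset (Fin d → ℤ)) : Prop :=
  (0 : Fin d → ℤ) ∈ Λ ∧ ∀ k ∈ Λ, -k ∈ Λ

/-- Bounded and coercive prior: `a·I ≤ Ψ(e^{iθ}) ≤ b·I` for all `θ`, with `0 < a < b`. -/
def BoundedCoercive {d m : ℕ} (Ψ : (Fin d → ℝ) → Matrix (Fin m) (Fin m) ℂ) : Prop :=
  ∃ a b : ℝ, 0 < a ∧ a < b ∧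
    ∀ θ, (Ψ θ - (a : ℂ) • 1).PosSemidef ∧ ((b : ℂ) • 1 - Ψ θ).PosSemidef

/-- `z(θ) = (e^{iθ₁}, …, e^{iθ_d})`. -/
def zvec {d : ℕ} (θ : Fin d → ℝ) : Fin d → ℂ := fun j => Complex.exp (Complex.I * θ j)

/-- Each entry of `Ψ` is a rational function of `(e^{iθ₁}, …, e^{iθ_d})`: `Ψ = N_Ψ/d_Ψ`
with `N_Ψ` a matrix of polynomials and `d_Ψ` a scalar polynomial non-vanishing on the torus. -/
def RationalPrior {d m : ℕ} (Ψ : (Fin d → ℝ) → Matrix (Fin m) (Fin m) ℂ) : Prop :=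
  ∃ (N : Matrix (Fin m) (Fin m) (MvPolynomial (Fin d) ℂ)) (dP : MvPolynomial (Fin d) ℂ),
    ∀ θ : Fin d → ℝ, MvPolynomial.eval (zvec θ) dP ≠ 0 ∧
      Ψ θ = (MvPolynomial.eval (zvec θ) dP)⁻¹ • N.map (MvPolynomial.eval (zvec θ))

/-- The feasible set `ℒ₊`: dual variables `Q` with `νΨ(e^{iθ})⁻¹ + Q(e^{iθ})` positive
semidefinite for every `θ` and not identically zero. -/
def memFeasible {d m : ℕ} (ν : ℕ) (Λ : Finset (Fin d → ℤ))
    (Ψ : (Fin d → ℝ) → Matrix (Fin m) (Fin m) ℂ)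
    (Q : (Fin d → ℤ) → Matrix (Fin m) (Fin m) ℂ) : Prop :=
  IsDualVar Q ∧
  (∀ θ, ((ν : ℂ) • (Ψ θ)⁻¹ + trigPoly Λ Q θ).PosSemidef) ∧
  ¬ ∀ θ, (ν : ℂ) • (Ψ θ)⁻¹ + trigPoly Λ Q θ = 0

/-- `⟨Q, Σ⟩ := Σ_{k∈Λ} trace(Q_k Σ_k^*)` (a real number for dual variables). -/
def pairing {d m : ℕ} (Λ : Finset (Fin d → ℤ))
    (Q Sig : (Fin d → ℤ) → Matrix (Fin m) (Fin m) ℂ) : ℝ :=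
  (∑ k ∈ Λ, Matrix.trace (Q k * (Sig k)ᴴ)).re

/-- The dual function
`J_ν(Q) = ⟨Q,Σ⟩ + (ν/(ν−1)) ∫ trace{[Ψ⁻¹ (Ψ⁻¹ + Q/ν)⁻¹]^{ν−1}} dμ`, with values in
`ℝ ∪ {+∞}` (the integral is a Lebesgue integral of the a.e.-defined nonnegative integrand). -/
def Jnu {d m : ℕ} (ν : ℕ) (Λ : Finset (Fin d → ℤ))
    (Ψ : (Fin d → ℝ) → Matrix (Fin m) (Fin m) ℂ)
    (Sig Q : (Fin d → ℤ) → Matrix (Fin m) (Fin m) ℂ) : EReal :=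
  ((pairing Λ Q Sig : ℝ) : EReal) +
    ((((ν : ℝ≥0∞) / ((ν : ℝ≥0∞) - 1)) *
      ∫⁻ θ, ENNReal.ofReal
        (Matrix.trace (((Ψ θ)⁻¹ * ((Ψ θ)⁻¹ + ((ν : ℂ))⁻¹ • trigPoly Λ Q θ)⁻¹) ^ (ν - 1))).re
        ∂(torusMeasure d) : ℝ≥0∞) : EReal)

/-- The feasibility assumption, density form: `Φ₀` is an integrable Hermitian-matrix-valued
density, positive semidefinite a.e., positive definite on some nonempty open ball contained
in the torus, whose Fourier coefficients over `Λ` match the covariance data `Σ`. -/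
def FeasibleData {d m : ℕ} (Λ : Finset (Fin d → ℤ))
    (Sig : (Fin d → ℤ) → Matrix (Fin m) (Fin m) ℂ)
    (Φ₀ : (Fin d → ℝ) → Matrix (Fin m) (Fin m) ℂ) : Prop :=
  (∀ i j, Integrable (fun θ => Φ₀ θ i j) (torusMeasure d)) ∧
  (∀ᵐ θ ∂(torusMeasure d), (Φ₀ θ).PosSemidef) ∧
  (∃ (θc : Fin d → ℝ) (ε : ℝ), 0 < ε ∧ Metric.ball θc ε ⊆ torusSet d ∧
      ∀ θ ∈ Metric.ball θc ε, (Φ₀ θ).PosDef) ∧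
  ∀ k ∈ Λ, ∀ i j, ∫ θ, eik k θ * Φ₀ θ i j ∂(torusMeasure d) = Sig k i j

/-- Covariance data: Hermitian symmetry `Σ_{−k} = Σ_k^*`. -/
def IsCovData {d m : ℕ} (Sig : (Fin d → ℤ) → Matrix (Fin m) (Fin m) ℂ) : Prop :=
  ∀ k, Sig (-k) = (Sig k)ᴴ

end

open Matrix MeasureTheory ComplexOrder ENNReal
noncomputable section

/-!
Pointwise, `νΨ⁻¹ + Q ⪰ 0` and `Φ₀ ⪰ 0` give `0 ≤ ν tr(Ψ⁻¹Φ₀) + tr(QΦ₀)`. Integrating, and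
reading `∫ tr(QΦ₀) dμ` as `⟨Q, Σ⟩` through the Fourier coefficients of `Φ₀` (whose Hermitian
symmetry `Φ̂₀(−k) = Φ̂₀(k)ᴴ` comes from `Φ₀` being Hermitian), yields `α ≤ ⟨Q, Σ⟩`. Coercivity
`aI ≤ Ψ` gives `0 ≤ Ψ⁻¹ ≤ a⁻¹I`, so `tr(Ψ⁻¹Φ₀)` is dominated by `a⁻¹ tr Φ₀` and is integrable.
Finally `J_ν(Q) − ⟨Q, Σ⟩` is a nonnegative integral.
-/

open scoped MatrixOrder

namespace Matrix

section Order

variable {n 𝕜 : Type*} [Fintype n] [RCLike 𝕜]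

lemma PosSemidef.trace_mul_nonneg {A B : Matrix n n 𝕜} (hA : A.PosSemidef) (hB : B.PosSemidef) :
    0 ≤ (A * B).trace := by
  classical
  rw [← CFC.sqrt_mul_sqrt_self B hB.nonneg, ← Matrix.mul_assoc, trace_mul_cycle]
  exact (conjugate_nonneg_of_nonneg hA.nonneg (CFC.sqrt_nonneg B)).posSemidef.trace_nonneg

lemma trace_mul_le_trace_mul_of_le {A B C : Matrix n n 𝕜} (hAB : A ≤ B) (hC : C.PosSemidef) :
    (A * C).trace ≤ (B * C).trace := by
  rw [← sub_nonneg, ← trace_sub, ← Matrix.sub_mul]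
  exact (sub_nonneg.2 hAB).posSemidef.trace_mul_nonneg hC

end Order

lemma posDef_of_smul_one_le {n 𝕜 : Type*} [DecidableEq n] [RCLike 𝕜] {A : Matrix n n 𝕜} {a : ℝ}
    (ha : 0 < a) (h : (a : 𝕜) • 1 ≤ A) : A.PosDef := by
  have := (PosDef.one.smul (RCLike.ofReal_pos (K := 𝕜) |>.2 ha)).add_posSemidef (le_iff.1 h)
  rwa [add_sub_cancel] at this

open scoped Matrix.Norms.L2Operator in
lemma inv_le_smul_one_of_smul_one_le {n : Type*} [Fintype n] [DecidableEq n]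
    {A : Matrix n n ℂ} {a : ℝ} (ha : 0 < a) (h : (a : ℂ) • 1 ≤ A) : A⁻¹ ≤ (a : ℂ)⁻¹ • 1 := by
  have hpos : IsStrictlyPositive ((a : ℂ) • (1 : Matrix n n ℂ)) :=
    (PosDef.one.smul (by exact_mod_cast ha)).isStrictlyPositive
  have hinv : ((a : ℂ) • (1 : Matrix n n ℂ))⁻¹ = (a : ℂ)⁻¹ • 1 := inv_eq_left_inv <| by
    rw [smul_mul_smul_comm, inv_mul_cancel₀ (by exact_mod_cast ha.ne'), Matrix.one_mul, one_smul]
  have := CStarAlgebra.ringInverse_le_ringInverse h hpos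
  rwa [← nonsing_inv_eq_ringInverse, ← nonsing_inv_eq_ringInverse, hinv] at this

end Matrix

lemma Continuous.matrix_inv {X n 𝕜 : Type*} [TopologicalSpace X] [Fintype n] [DecidableEq n]
    [NormedField 𝕜] {f : X → Matrix n n 𝕜} (hf : Continuous f) (h : ∀ x, IsUnit (f x).det) :
    Continuous fun x => (f x)⁻¹ := by
  simp_rw [Matrix.inv_def, Ring.inverse_eq_inv']
  exact (hf.matrix_det.inv₀ fun x => (h x).ne_zero).smul hf.matrix_adjugate

section Integration

variable {X n : Type*} [MeasurableSpace X] {μ : Measure X} [Fintype n]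

lemma aestronglyMeasurable_trace_mul {M F : X → Matrix n n ℂ}
    (hM : ∀ i j, AEStronglyMeasurable (fun x => M x i j) μ)
    (hF : ∀ i j, AEStronglyMeasurable (fun x => F x i j) μ) :
    AEStronglyMeasurable (fun x => (M x * F x).trace) μ := by
  simp only [trace, diag, mul_apply]
  exact Finset.aestronglyMeasurable_fun_sum _ fun i _ =>
    Finset.aestronglyMeasurable_fun_sum _ fun j _ => (hM i j).mul (hF j i)

lemma integrable_trace_mul_left (A : Matrix n n ℂ) {F : X → Matrix n n ℂ}
    (hF : ∀ i j, Integrable (fun x => F x i j) μ) :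
    Integrable (fun x => (A * F x).trace) μ := by
  simp only [trace, diag, mul_apply]
  exact integrable_finsetSum _ fun i _ => integrable_finsetSum _ fun j _ =>
    (hF j i).const_mul _

lemma integral_trace_mul_left (A : Matrix n n ℂ) {F : X → Matrix n n ℂ}
    (hF : ∀ i j, Integrable (fun x => F x i j) μ) :
    ∫ x, (A * F x).trace ∂μ = (A * of fun i j => ∫ x, F x i j ∂μ).trace := by
  simp only [trace, diag, mul_apply, of_apply]
  refine (integral_finsetSum _ fun i _ => integrable_finsetSum _ fun j _ =>
    (hF j i).const_mul _).trans (Finset.sum_congr rfl fun i _ => ?_)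
  exact (integral_finsetSum _ fun j _ => (hF j i).const_mul _).trans
    (Finset.sum_congr rfl fun j _ => integral_const_mul _ _)

lemma integrable_re_trace_inv_mul [DecidableEq n] [TopologicalSpace X] [OpensMeasurableSpace X]
    {Ψ Φ : X → Matrix n n ℂ} {a : ℝ} (ha : 0 < a) (hΨ : ∀ x, (a : ℂ) • 1 ≤ Ψ x)
    (hΨc : Continuous Ψ) (hΦ : ∀ i j, Integrable (fun x => Φ x i j) μ)
    (hΦpsd : ∀ᵐ x ∂μ, (Φ x).PosSemidef) :
    Integrable (fun x => ((Ψ x)⁻¹ * Φ x).trace.re) μ := by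
  have hΨpd x : (Ψ x).PosDef := posDef_of_smul_one_le ha (hΨ x)
  have hΨinv : Continuous fun x => (Ψ x)⁻¹ :=
    hΨc.matrix_inv fun x => (isUnit_iff_isUnit_det _).1 (hΨpd x).isUnit
  have hmeas : AEStronglyMeasurable (fun x => ((Ψ x)⁻¹ * Φ x).trace) μ :=
    aestronglyMeasurable_trace_mul (fun i j => (hΨinv.matrix_elem i j).aestronglyMeasurable)
      fun i j => (hΦ i j).aestronglyMeasurable
  have htrΦ : Integrable (fun x => (Φ x).trace.re) μ := by
    simpa using (integrable_trace_mul_left 1 hΦ).re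
  refine (htrΦ.const_mul a⁻¹).mono' hmeas.re ?_
  filter_upwards [hΦpsd] with x hx
  have hlow := (Complex.le_def.1 ((hΨpd x).posSemidef.inv.trace_mul_nonneg hx)).1
  have hupp := (Complex.le_def.1
    (trace_mul_le_trace_mul_of_le (inv_le_smul_one_of_smul_one_le ha (hΨ x)) hx)).1
  simp only [smul_mul, Matrix.one_mul, trace_smul, smul_eq_mul, ← Complex.ofReal_inv,
    Complex.re_ofReal_mul] at hupp
  rw [Real.norm_eq_abs, abs_of_nonneg hlow]
  exact hupp

lemma neg_mul_integral_le_integral_of_posSemidef_smul_add {A B Φ : X → Matrix n n ℂ} {c : ℝ}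
    (hAB : ∀ x, ((c : ℂ) • A x + B x).PosSemidef) (hΦ : ∀ᵐ x ∂μ, (Φ x).PosSemidef)
    (hA : Integrable (fun x => (A x * Φ x).trace.re) μ)
    (hB : Integrable (fun x => (B x * Φ x).trace.re) μ) :
    -(c * ∫ x, (A x * Φ x).trace.re ∂μ) ≤ ∫ x, (B x * Φ x).trace.re ∂μ := by
  rw [neg_le_iff_add_nonneg', ← integral_const_mul, ← integral_add (hA.const_mul c) hB]
  refine integral_nonneg_of_ae ?_
  filter_upwards [hΦ] with x hx
  simpa [add_mul, trace_smul] using (Complex.le_def.1 ((hAB x).trace_mul_nonneg hx)).1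

end Integration

section Fourier

variable {d m : ℕ}

lemma eik_neg (k : Fin d → ℤ) (θ : Fin d → ℝ) : eik (-k) θ = starRingEnd ℂ (eik k θ) := by
  simp [eik, ← Complex.exp_conj, map_sum, Finset.sum_neg_distrib]

lemma norm_eik (k : Fin d → ℤ) (θ : Fin d → ℝ) : ‖eik k θ‖ = 1 := by
  have : ∑ j, (k j : ℂ) * (θ j : ℂ) = ((∑ j, (k j : ℝ) * θ j : ℝ) : ℂ) := by push_cast; rfl
  rw [eik, this, mul_comm, Complex.norm_exp_ofReal_mul_I]

lemma continuous_eik (k : Fin d → ℤ) : Continuous (eik k) := by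
  unfold eik
  fun_prop

lemma integrable_eik_smul_apply {μ : Measure (Fin d → ℝ)}
    {Φ : (Fin d → ℝ) → Matrix (Fin m) (Fin m) ℂ} (hΦ : ∀ i j, Integrable (fun θ => Φ θ i j) μ) (k : Fin d → ℤ) (i j : Fin m) :
    Integrable (fun θ => (eik k θ • Φ θ) i j) μ :=
  (hΦ i j).bdd_mul (continuous_eik k).aestronglyMeasurable
    (.of_forall fun θ => (norm_eik k θ).le)

lemma RationalPrior.continuous {Ψ : (Fin d → ℝ) → Matrix (Fin m) (Fin m) ℂ}
    (hΨ : RationalPrior Ψ) : Continuous Ψ := by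
  obtain ⟨N, dP, hN⟩ := hΨ
  have hz : Continuous (zvec (d := d)) := continuous_pi fun j => by unfold zvec; fun_prop
  have heval p : Continuous fun θ => MvPolynomial.eval (zvec θ) p :=
    (MvPolynomial.continuous_eval p).comp hz
  rw [funext fun θ => (hN θ).2]
  exact ((heval dP).inv₀ fun θ => (hN θ).1).smul (continuous_matrix fun i j => heval (N i j))

def matrixFourierCoeff (μ : Measure (Fin d → ℝ)) (Φ : (Fin d → ℝ) → Matrix (Fin m) (Fin m) ℂ)
    (k : Fin d → ℤ) : Matrix (Fin m) (Fin m) ℂ :=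
  of fun i j => ∫ θ, eik k θ * Φ θ i j ∂μ

lemma matrixFourierCoeff_neg {μ : Measure (Fin d → ℝ)}
    {Φ : (Fin d → ℝ) → Matrix (Fin m) (Fin m) ℂ} (hΦ : ∀ᵐ θ ∂μ, (Φ θ).IsHermitian)
    (k : Fin d → ℤ) : matrixFourierCoeff μ Φ (-k) = (matrixFourierCoeff μ Φ k)ᴴ := by
  ext i j
  simp only [matrixFourierCoeff, conjTranspose_apply, of_apply, RCLike.star_def, ← integral_conj]
  refine integral_congr_ae ?_
  filter_upwards [hΦ] with θ hθ
  rw [map_mul, ← eik_neg, ← hθ.apply i j, RCLike.star_def]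

lemma trace_trigPoly_mul (Λ : Finset (Fin d → ℤ)) (Q : (Fin d → ℤ) → Matrix (Fin m) (Fin m) ℂ)
    (θ : Fin d → ℝ) (M : Matrix (Fin m) (Fin m) ℂ) :
    (trigPoly Λ Q θ * M).trace = ∑ k ∈ Λ, (Q k * (eik (-k) θ • M)).trace := by
  simp only [trigPoly, Finset.sum_mul, trace_sum, smul_mul, Matrix.mul_smul]

variable {μ : Measure (Fin d → ℝ)} {Λ : Finset (Fin d → ℤ)}
  {Q : (Fin d → ℤ) → Matrix (Fin m) (Fin m) ℂ} {Φ : (Fin d → ℝ) → Matrix (Fin m) (Fin m) ℂ}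

lemma integrable_trace_trigPoly_mul (hΦ : ∀ i j, Integrable (fun θ => Φ θ i j) μ) :
    Integrable (fun θ => (trigPoly Λ Q θ * Φ θ).trace) μ := by
  simp_rw [trace_trigPoly_mul]
  exact integrable_finsetSum _ fun k _ =>
    integrable_trace_mul_left _ (integrable_eik_smul_apply hΦ (-k))

lemma integral_trace_trigPoly_mul (hΦ : ∀ i j, Integrable (fun θ => Φ θ i j) μ) :
    ∫ θ, (trigPoly Λ Q θ * Φ θ).trace ∂μ
      = ∑ k ∈ Λ, (Q k * matrixFourierCoeff μ Φ (-k)).trace := by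
  simp_rw [trace_trigPoly_mul]
  rw [integral_finsetSum _ fun k _ =>
    integrable_trace_mul_left _ (integrable_eik_smul_apply hΦ (-k))]
  exact Finset.sum_congr rfl fun k _ =>
    integral_trace_mul_left _ (integrable_eik_smul_apply hΦ (-k))

lemma pairing_eq_integral_re_trace_trigPoly_mul {Sig : (Fin d → ℤ) → Matrix (Fin m) (Fin m) ℂ}
    (hΦ : ∀ i j, Integrable (fun θ => Φ θ i j) μ) (hΦherm : ∀ᵐ θ ∂μ, (Φ θ).IsHermitian)
    (hSig : ∀ k ∈ Λ, matrixFourierCoeff μ Φ k = Sig k) :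
    pairing Λ Q Sig = ∫ θ, (trigPoly Λ Q θ * Φ θ).trace.re ∂μ := by
  have := integral_re (integrable_trace_trigPoly_mul (Λ := Λ) (Q := Q) hΦ)
  simp only [RCLike.re_to_complex] at this
  rw [this, integral_trace_trigPoly_mul hΦ, pairing]
  congr 1
  exact Finset.sum_congr rfl fun k hk => by rw [matrixFourierCoeff_neg hΦherm, hSig k hk]

end Fourier

lemma pairing_le_Jnu {d m : ℕ} (ν : ℕ) (Λ : Finset (Fin d → ℤ))
    (Ψ : (Fin d → ℝ) → Matrix (Fin m) (Fin m) ℂ) (Sig Q : (Fin d → ℤ) → Matrix (Fin m) (Fin m) ℂ) :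
    (pairing Λ Q Sig : EReal) ≤ Jnu ν Λ Ψ Sig Q :=
  le_add_of_nonneg_right (EReal.coe_ennreal_nonneg _)

theorem Jnu_bounded_below_general
    {d m : ℕ} (ν : ℕ)
    (Λ : Finset (Fin d → ℤ))
    (Ψ : (Fin d → ℝ) → Matrix (Fin m) (Fin m) ℂ)
    (hΨbc : BoundedCoercive Ψ) (hΨrat : RationalPrior Ψ)
    (Sig : (Fin d → ℤ) → Matrix (Fin m) (Fin m) ℂ)
    (Φ₀ : (Fin d → ℝ) → Matrix (Fin m) (Fin m) ℂ) (hfeas : FeasibleData Λ Sig Φ₀)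
    (α : ℝ)
    (hα : α = -(ν : ℝ) * ∫ θ, (Matrix.trace ((Ψ θ)⁻¹ * Φ₀ θ)).re ∂(torusMeasure d)) :
    ∀ Q : (Fin d → ℤ) → Matrix (Fin m) (Fin m) ℂ, memFeasible ν Λ Ψ Q →
      α ≤ pairing Λ Q Sig ∧
      ((pairing Λ Q Sig : ℝ) : EReal) ≤ Jnu ν Λ Ψ Sig Q ∧
      ((α : ℝ) : EReal) ≤ Jnu ν Λ Ψ Sig Q := by
  intro Q hQ
  obtain ⟨a, _, ha, -, hΨa⟩ := hΨbc
  obtain ⟨hΦ, hΦpsd, -, hΦfour⟩ := hfeas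
  have hg := integrable_re_trace_inv_mul ha (fun θ => (hΨa θ).1) hΨrat.continuous hΦ hΦpsd
  have hpairing : α ≤ pairing Λ Q Sig := by
    rw [hα, pairing_eq_integral_re_trace_trigPoly_mul hΦ (hΦpsd.mono fun _ h => h.isHermitian)
      fun k hk => Matrix.ext (hΦfour k hk), neg_mul]
    exact neg_mul_integral_le_integral_of_posSemidef_smul_add (fun θ => by simpa using hQ.2.1 θ)
      hΦpsd hg (integrable_trace_trigPoly_mul hΦ).re
  exact ⟨hpairing, pairing_le_Jnu .., (EReal.coe_le_coe_iff.2 hpairing).trans (pairing_le_Jnu ..)⟩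

/-- **Lower bound on `⟨Q,Σ⟩` and on the dual function over `ℒ₊`.**
Under the feasibility assumption with density `Φ₀`, set
`α := −ν·∫ trace(Ψ⁻¹ Φ₀) dμ`. Then `⟨Q,Σ⟩ ≥ α` for every `Q ∈ ℒ₊`, and consequently
`J_ν(Q) ≥ ⟨Q,Σ⟩ ≥ α`; in particular `J_ν` is bounded from below on `ℒ₊`. -/
theorem Jnu_bounded_below
    {d m : ℕ} (hd : 1 ≤ d) (hm : 1 ≤ m) (ν : ℕ) (hν : 2 ≤ ν)
    (Λ : Finset (Fin d → ℤ)) (hΛ : IsIndexSet Λ)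
    (Ψ : (Fin d → ℝ) → Matrix (Fin m) (Fin m) ℂ)
    (hΨbc : BoundedCoercive Ψ) (hΨrat : RationalPrior Ψ)
    (Sig : (Fin d → ℤ) → Matrix (Fin m) (Fin m) ℂ) (hSig : IsCovData Sig)
    (Φ₀ : (Fin d → ℝ) → Matrix (Fin m) (Fin m) ℂ) (hfeas : FeasibleData Λ Sig Φ₀)
    (α : ℝ)
    (hα : α = -(ν : ℝ) * ∫ θ, (Matrix.trace ((Ψ θ)⁻¹ * Φ₀ θ)).re ∂(torusMeasure d)) :
    ∀ Q : (Fin d → ℤ) → Matrix (Fin m) (Fin m) ℂ, memFeasible ν Λ Ψ Q →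
      α ≤ pairing Λ Q Sig ∧
      ((pairing Λ Q Sig : ℝ) : EReal) ≤ Jnu ν Λ Ψ Sig Q ∧
      ((α : ℝ) : EReal) ≤ Jnu ν Λ Ψ Sig Q :=
  Jnu_bounded_below_general ν Λ Ψ hΨbc hΨrat Sig Φ₀ hfeas α hα

end
end

section
/- Let Q° ∈ ℒ₊, let K(Q°) := { Σ_K = {Σ_{K,k}}_{k∈Λ} with Σ_{K,−k} = Σ_{K,k}^* : ⟨Σ_K, Q − Q°⟩ ≤ 0 for all Q ∈ ℒ₊ } be the normal cone to ℒ₊ at Q°, and let 𝔠₊ := { Σ' : ⟨Σ', Q⟩ > 0 for every dual variable Q ≠ 0 such that Q(e^{iθ}) is positive semidefinite for all θ ∈ 𝕋^d }. If Σ_K ∈ K(Q°), then −Σ_K belongs to the closure of 𝔠₊. -/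
/-!
If `Q ≠ 0` is a dual variable with `Q(e^{iθ}) ⪰ 0`, then `Q° + Q ∈ ℒ₊`, so the normal-cone
inequality gives `⟨−Σ_K, Q⟩ ≥ 0`. Adding `δ·I` to `−Σ_K` at frequency `0` adds `δ·Re tr Q₀`
to the pairing, and `Re tr Q₀ > 0`: for `N` exceeding twice every frequency in `Λ`, discrete
Fourier inversion writes `N^d Q₀` as the sum of the values of `Q` on a grid of `N^d` points of
the torus, and the grid may be shifted to pass through a point where `Q ≠ 0`. Letting `δ → 0`
puts `−Σ_K` in the closure of `𝔠₊`.
-/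

open Matrix MeasureTheory ComplexOrder ENNReal
open Matrix MeasureTheory ComplexOrder ENNReal
noncomputable section

/-- The norm `‖Q‖ = (Σ_{k∈Λ} trace(Q_k Q_k^*))^{1/2}` on coefficient families. -/
def dualNorm {d m : ℕ} (Λ : Finset (Fin d → ℤ))
    (Q : (Fin d → ℤ) → Matrix (Fin m) (Fin m) ℂ) : ℝ :=
  Real.sqrt ((∑ k ∈ Λ, Matrix.trace (Q k * (Q k)ᴴ)).re)

/-- Membership in the dual cone `𝔠₊` of the nonnegative matrix trigonometric polynomials:
`⟨Σ', Q⟩ > 0` for every nonzero dual variable `Q` with `Q(e^{iθ}) ⪰ 0` on the torus. -/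
def memDualCone {d m : ℕ} (Λ : Finset (Fin d → ℤ))
    (Sig' : (Fin d → ℤ) → Matrix (Fin m) (Fin m) ℂ) : Prop :=
  IsCovData Sig' ∧
  ∀ Q : (Fin d → ℤ) → Matrix (Fin m) (Fin m) ℂ, IsDualVar Q →
    (∀ θ, (trigPoly Λ Q θ).PosSemidef) → (∃ k ∈ Λ, Q k ≠ 0) →
    0 < pairing Λ Q Sig'

namespace Matrix.PosSemidef

variable {n : Type*} {A B : Matrix n n ℂ}

lemma re_trace_nonneg [Fintype n] (hA : A.PosSemidef) : 0 ≤ A.trace.re :=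
  (Complex.le_def.mp hA.trace_nonneg).1

lemma re_trace_pos [Fintype n] (hA : A.PosSemidef) (hA0 : A ≠ 0) : 0 < A.trace.re :=
  (Complex.lt_def.mp (hA.trace_nonneg.lt_of_ne (Ne.symm (mt hA.trace_eq_zero_iff.mp hA0)))).1

lemma eq_zero_of_add_eq_zero (hA : A.PosSemidef) (hB : B.PosSemidef) (hAB : A + B = 0) :
    A = 0 := by
  open scoped MatrixOrder in
  exact ((add_eq_zero_iff_of_nonneg hA.nonneg hB.nonneg).mp hAB).1

end Matrix.PosSemidef

lemma IsPrimitiveRoot.sum_zpow_mul_eq_zero {K : Type*} [Field K] {ζ : K} {N : ℕ}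
    (hζ : IsPrimitiveRoot ζ N) {a : ℤ} (ha : ¬ (N : ℤ) ∣ a) :
    ∑ s : Fin N, ζ ^ (a * s) = 0 := by
  have hne : ζ ^ a ≠ 1 := by rwa [ne_eq, hζ.zpow_eq_one_iff_dvd]
  have hpow : (ζ ^ a) ^ N = 1 := by
    rw [← zpow_natCast, ← _root_.zpow_mul, mul_comm, _root_.zpow_mul, zpow_natCast, hζ.pow_eq_one,
      _root_.one_zpow]
  simp_rw [_root_.zpow_mul, zpow_natCast]
  rw [Fin.sum_univ_eq_sum_range (fun s => (ζ ^ a) ^ s), geom_sum_eq hne, hpow, sub_self, zero_div]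

section TorusGrid

variable {d : ℕ}

lemma eik_add (a b : Fin d → ℤ) (θ : Fin d → ℝ) : eik (a + b) θ = eik a θ * eik b θ := by
  simp only [eik, ← Complex.exp_add, Pi.add_apply, Int.cast_add, add_mul, Finset.sum_add_distrib,
    mul_add]

@[simp]
lemma eik_zero (θ : Fin d → ℝ) : eik (0 : Fin d → ℤ) θ = 1 := by
  simp [eik]

def torusGrid (N : ℕ) (θ : Fin d → ℝ) (t : Fin d → Fin N) : Fin d → ℝ :=
  fun j => θ j + 2 * Real.pi * t j / N

@[simp]
lemma torusGrid_zero (N : ℕ) [NeZero N] (θ : Fin d → ℝ) : torusGrid N θ 0 = θ := by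
  ext j
  simp [torusGrid]

lemma eik_torusGrid (N : ℕ) [NeZero N] (a : Fin d → ℤ) (θ : Fin d → ℝ) (t : Fin d → Fin N) :
    eik a (torusGrid N θ t) =
      eik a θ * ∏ j, Complex.exp (2 * Real.pi * Complex.I / N) ^ (a j * t j) := by
  simp only [eik, torusGrid, ← Complex.exp_int_mul, ← Complex.exp_sum, ← Complex.exp_add]
  congr 1
  simp only [Finset.mul_sum, ← Finset.sum_add_distrib]
  refine Finset.sum_congr rfl fun j _ => ?_
  push_cast
  ring

lemma sum_eik_torusGrid_eq_zero (N : ℕ) [NeZero N] {a : Fin d → ℤ} (ha : ∃ j, ¬ (N : ℤ) ∣ a j)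
    (θ : Fin d → ℝ) : ∑ t : Fin d → Fin N, eik a (torusGrid N θ t) = 0 := by
  obtain ⟨j, hj⟩ := ha
  simp_rw [eik_torusGrid, ← Finset.mul_sum]
  rw [← Fintype.prod_sum fun j (s : Fin N) => Complex.exp (2 * Real.pi * Complex.I / N) ^ (a j * s),
    Finset.prod_eq_zero (Finset.mem_univ j)
      ((Complex.isPrimitiveRoot_exp N (NeZero.ne N)).sum_zpow_mul_eq_zero hj), mul_zero]

variable {m : ℕ}

lemma sum_eik_smul_trigPoly_torusGrid (N : ℕ) [NeZero N] {Λ : Finset (Fin d → ℤ)}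
    (hΛ : ∀ k ∈ Λ, ∀ l ∈ Λ, k ≠ l → ∃ j, ¬ (N : ℤ) ∣ (l - k) j) {l : Fin d → ℤ} (hl : l ∈ Λ)
    (Q : (Fin d → ℤ) → Matrix (Fin m) (Fin m) ℂ) (θ : Fin d → ℝ) :
    ∑ t : Fin d → Fin N, eik l (torusGrid N θ t) • trigPoly Λ Q (torusGrid N θ t) =
      ((N : ℂ) ^ d) • Q l := by
  simp only [trigPoly, Finset.smul_sum, smul_smul, ← eik_add, ← sub_eq_add_neg]
  rw [Finset.sum_comm, Finset.sum_eq_single_of_mem l hl fun k hk hkl => ?_]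
  · simp [← Nat.cast_smul_eq_nsmul ℂ]
  · rw [← Finset.sum_smul, sum_eik_torusGrid_eq_zero N (hΛ k hk l hl hkl), zero_smul]

lemma exists_modulus_separating_frequencies (Λ : Finset (Fin d → ℤ)) :
    ∃ N : ℕ, N ≠ 0 ∧ ∀ k ∈ Λ, ∀ l ∈ Λ, k ≠ l → ∃ j, ¬ (N : ℤ) ∣ (l - k) j := by
  set B := Λ.sup fun k => Finset.univ.sup fun j => (k j).natAbs
  have hB : ∀ k ∈ Λ, ∀ j, (k j).natAbs ≤ B := fun k hk j =>
    (Finset.le_sup (f := fun j => (k j).natAbs) (Finset.mem_univ j)).trans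
      (Finset.le_sup (f := fun k => Finset.univ.sup fun j => (k j).natAbs) hk)
  refine ⟨2 * B + 1, by omega, fun k hk l hl hkl => ?_⟩
  obtain ⟨j, hj⟩ := Function.ne_iff.mp hkl
  refine ⟨j, fun hdvd => hj (sub_eq_zero.mp (Int.eq_zero_of_dvd_of_natAbs_lt_natAbs hdvd ?_)).symm⟩
  have := Int.natAbs_sub_le (l j) (k j)
  have := hB k hk j
  have := hB l hl j
  omega

end TorusGrid

section DualCone

variable {d m : ℕ} {Λ : Finset (Fin d → ℤ)}

lemma trigPoly_add (Q R : (Fin d → ℤ) → Matrix (Fin m) (Fin m) ℂ) (θ : Fin d → ℝ) :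
    trigPoly Λ (Q + R) θ = trigPoly Λ Q θ + trigPoly Λ R θ := by
  simp [trigPoly, smul_add, Finset.sum_add_distrib]

lemma memFeasible.add_of_posSemidef {ν : ℕ} {Ψ : (Fin d → ℝ) → Matrix (Fin m) (Fin m) ℂ}
    {Q₀ Q : (Fin d → ℤ) → Matrix (Fin m) (Fin m) ℂ} (hQ₀ : memFeasible ν Λ Ψ Q₀)
    (hQ : IsDualVar Q) (hpsd : ∀ θ, (trigPoly Λ Q θ).PosSemidef) :
    memFeasible ν Λ Ψ (Q₀ + Q) := by
  obtain ⟨hdual, hpsd₀, hne⟩ := hQ₀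
  simp only [memFeasible, trigPoly_add, ← add_assoc]
  refine ⟨fun k => by simp [hdual k, hQ k], fun θ => (hpsd₀ θ).add (hpsd θ), fun hzero => ?_⟩
  exact hne fun θ => (hpsd₀ θ).eq_zero_of_add_eq_zero (hpsd θ) (hzero θ)

lemma IsCovData.add {S T : (Fin d → ℤ) → Matrix (Fin m) (Fin m) ℂ} (hS : IsCovData S)
    (hT : IsCovData T) : IsCovData (S + T) := fun k => by simp [hS k, hT k]

lemma IsCovData.neg {S : (Fin d → ℤ) → Matrix (Fin m) (Fin m) ℂ} (hS : IsCovData S) :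
    IsCovData (-S) := fun k => by simp [hS k]

lemma isCovData_single_zero (r : ℝ) :
    IsCovData (Pi.single (0 : Fin d → ℤ) ((r : ℂ) • (1 : Matrix (Fin m) (Fin m) ℂ))) := by
  intro k
  by_cases hk : k = 0 <;> simp [hk]

lemma pairing_add_right (Q S T : (Fin d → ℤ) → Matrix (Fin m) (Fin m) ℂ) :
    pairing Λ Q (S + T) = pairing Λ Q S + pairing Λ Q T := by
  simp [pairing, mul_add, Finset.sum_add_distrib]

lemma pairing_neg_right (Q S : (Fin d → ℤ) → Matrix (Fin m) (Fin m) ℂ) :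
    pairing Λ Q (-S) = -pairing Λ Q S := by
  simp [pairing]

lemma pairing_single_zero (h0 : (0 : Fin d → ℤ) ∈ Λ) (Q : (Fin d → ℤ) → Matrix (Fin m) (Fin m) ℂ)
    (r : ℝ) : pairing Λ Q (Pi.single 0 ((r : ℂ) • 1)) = r * (Q 0).trace.re := by
  rw [pairing, Finset.sum_eq_single_of_mem 0 h0 fun k _ hk => by simp [hk]]
  simp

lemma dualNorm_single_zero (h0 : (0 : Fin d → ℤ) ∈ Λ) (r : ℝ) :
    dualNorm Λ (Pi.single 0 ((r : ℂ) • (1 : Matrix (Fin m) (Fin m) ℂ))) = |r| * √m := by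
  rw [dualNorm, Finset.sum_eq_single_of_mem 0 h0 fun k _ hk => by simp [hk]]
  simp only [Pi.single_eq_same, conjTranspose_smul, conjTranspose_one, smul_mul_smul_comm, mul_one,
    trace_smul, trace_one, Fintype.card_fin, smul_eq_mul, Complex.star_def, Complex.conj_ofReal]
  norm_cast
  rw [← sq, Real.sqrt_mul (sq_nonneg r), Real.sqrt_sq_eq_abs]

lemma re_trace_coeff_zero_pos (h0 : (0 : Fin d → ℤ) ∈ Λ)
    {Q : (Fin d → ℤ) → Matrix (Fin m) (Fin m) ℂ} (hQ : ∀ θ, (trigPoly Λ Q θ).PosSemidef)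
    (hne : ∃ k ∈ Λ, Q k ≠ 0) : 0 < (Q 0).trace.re := by
  obtain ⟨N, hN, hΛ⟩ := exists_modulus_separating_frequencies Λ
  have : NeZero N := ⟨hN⟩
  obtain ⟨θ, hθ⟩ : ∃ θ, trigPoly Λ Q θ ≠ 0 := by
    by_contra! hzero
    obtain ⟨k, hk, hQk⟩ := hne
    have := sum_eik_smul_trigPoly_torusGrid N hΛ hk Q 0
    exact hQk (by simpa [hzero, hN, eq_comm] using this)
  have hinv := sum_eik_smul_trigPoly_torusGrid N hΛ h0 Q θ
  simp only [eik_zero, one_smul] at hinv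
  have htrace : (N : ℝ) ^ d * (Q 0).trace.re =
      ∑ t : Fin d → Fin N, (trigPoly Λ Q (torusGrid N θ t)).trace.re := by
    have := congrArg (fun A => A.trace.re) hinv
    simp only [trace_sum, Complex.re_sum, trace_smul, smul_eq_mul] at this
    rw [this]
    exact_mod_cast (Complex.re_ofReal_mul _ _).symm
  have hsum : 0 < ∑ t : Fin d → Fin N, (trigPoly Λ Q (torusGrid N θ t)).trace.re :=
    Finset.sum_pos' (fun t _ => (hQ _).re_trace_nonneg)
      ⟨0, Finset.mem_univ _, by simpa using (hQ θ).re_trace_pos hθ⟩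
  rw [← htrace] at hsum
  exact pos_of_mul_pos_right hsum (by positivity)

end DualCone

theorem normalCone_subset_neg_closure_dualCone_general
    {d m : ℕ} (ν : ℕ)
    (Λ : Finset (Fin d → ℤ)) (hΛ : IsIndexSet Λ)
    (Ψ : (Fin d → ℝ) → Matrix (Fin m) (Fin m) ℂ)
    (Qopt : (Fin d → ℤ) → Matrix (Fin m) (Fin m) ℂ) (hQopt : memFeasible ν Λ Ψ Qopt)
    (SigK : (Fin d → ℤ) → Matrix (Fin m) (Fin m) ℂ) (hSigK : IsCovData SigK)
    (hK : ∀ Q : (Fin d → ℤ) → Matrix (Fin m) (Fin m) ℂ, memFeasible ν Λ Ψ Q →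
      pairing Λ (fun k => Q k - Qopt k) SigK ≤ 0) :
    ∀ ε : ℝ, 0 < ε →
      ∃ Sig' : (Fin d → ℤ) → Matrix (Fin m) (Fin m) ℂ,
        memDualCone Λ Sig' ∧ dualNorm Λ (fun k => Sig' k - (- SigK k)) < ε := by
  intro ε hε
  set δ := ε / (√m + 1)
  have hδ : 0 < δ := by positivity
  set E : (Fin d → ℤ) → Matrix (Fin m) (Fin m) ℂ := Pi.single 0 ((δ : ℂ) • 1)
  refine ⟨-SigK + E, ⟨hSigK.neg.add (isCovData_single_zero δ), ?_⟩, ?_⟩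
  · intro Q hQ hpsd hne
    have hnormal : pairing Λ Q SigK ≤ 0 := by
      simpa using hK _ (hQopt.add_of_posSemidef hQ hpsd)
    have htrace := re_trace_coeff_zero_pos hΛ.1 hpsd hne
    rw [pairing_add_right, pairing_neg_right, pairing_single_zero hΛ.1]
    linarith [mul_pos hδ htrace]
  · have hdiff : (fun k => (-SigK + E) k - -SigK k) = E := by
      funext k
      simp
    rw [hdiff, dualNorm_single_zero hΛ.1, abs_of_pos hδ]
    calc δ * √m < δ * (√m + 1) := by gcongr; exact lt_add_one _
      _ = ε := div_mul_cancel₀ ε (by positivity)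

/-- **The normal cone to `ℒ₊` is contained in minus the closure of the dual cone `𝔠₊`**
(Lemma 7.1). If `Σ_K` belongs to the normal cone `K(Q°)` of `ℒ₊` at `Q° ∈ ℒ₊`, i.e.
`⟨Σ_K, Q − Q°⟩ ≤ 0` for all `Q ∈ ℒ₊`, then `−Σ_K` is in the closure of `𝔠₊`
(with respect to the norm `‖·‖` on coefficient families). -/
theorem normalCone_subset_neg_closure_dualCone
    {d m : ℕ} (hd : 1 ≤ d) (hm : 1 ≤ m) (ν : ℕ) (hν : 2 ≤ ν)
    (Λ : Finset (Fin d → ℤ)) (hΛ : IsIndexSet Λ)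
    (Ψ : (Fin d → ℝ) → Matrix (Fin m) (Fin m) ℂ)
    (hΨbc : BoundedCoercive Ψ) (hΨrat : RationalPrior Ψ)
    (Qopt : (Fin d → ℤ) → Matrix (Fin m) (Fin m) ℂ) (hQopt : memFeasible ν Λ Ψ Qopt)
    (SigK : (Fin d → ℤ) → Matrix (Fin m) (Fin m) ℂ) (hSigK : IsCovData SigK)
    (hK : ∀ Q : (Fin d → ℤ) → Matrix (Fin m) (Fin m) ℂ, memFeasible ν Λ Ψ Q →
      pairing Λ (fun k => Q k - Qopt k) SigK ≤ 0) :
    ∀ ε : ℝ, 0 < ε →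
      ∃ Sig' : (Fin d → ℤ) → Matrix (Fin m) (Fin m) ℂ,
        memDualCone Λ Sig' ∧ dualNorm Λ (fun k => Sig' k - (- SigK k)) < ε :=
  normalCone_subset_neg_closure_dualCone_general ν Λ hΛ Ψ Qopt hQopt SigK hSigK hK

end
end
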